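/- arXiv:math/0702447 — 4 statements merged into one kernel-verified Lean document; each statement's English description precedes it below -/
import Mathlib

section
/- For any matrix A = (a_{pq}) ∈ M(n,ℍ) and any index i ∈ {1,…,n}, the i-th row determinant expands by cofactors along the i-th row: rdet_i A = Σ_{j=1}^n a_{ij}·R_{ij}, where the right ij-th cofactor is given by R_{ij} = −rdet_j ((A^{ii})_{.j}(a_{.i})) when i ≠ j, and R_{ii} = rdet_k (A^{ii}) with k = min({1,…,n}∖{i}). Here A^{ii} denotes the submatrix of A obtained by deleting both the i-th row and the i-th column, and (A^{ii})_{.j}(a_{.i}) is the matrix obtained from A by replacing its j-th column with its i-th column and then deleting both the i-th row and the i-th column. -/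
open Matrix Quaternion

noncomputable section

/-- The cycle (orbit) of `x` under `σ`, listed as `x, σ x, σ² x, …`. -/
def cyc {n : ℕ} (σ : Equiv.Perm (Fin n)) (x : Fin n) : List (Fin n) :=
  (List.range (Function.minimalPeriod (⇑σ) x)).map fun k => (σ ^ k) x

/-- The minimal representatives of the orbits of `σ` other than the orbit of `i`,
listed in increasing order. -/
def otherMins {n : ℕ} (σ : Equiv.Perm (Fin n)) (i : Fin n) : List (Fin n) :=
  (List.finRange n).filter fun x => decide (x ∉ cyc σ i ∧ ∀ y ∈ cyc σ x, x ≤ y)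

/-- The indices `1,…,n` listed according to the left-ordered cycle notation of `σ`
opening with the cycle of `i`: first the orbit of `i` (starting at `i`), then the other
orbits, ordered increasingly by their minimal elements, each starting at its minimal
element. -/
def rowList {n : ℕ} (σ : Equiv.Perm (Fin n)) (i : Fin n) : List (Fin n) :=
  cyc σ i ++ ((otherMins σ i).map (cyc σ)).flatten

/-- The indices `1,…,n` listed according to the right-ordered cycle notation of `σ`
closing with the cycle of `j`: the orbits other than that of `j`, ordered decreasingly
by their minimal elements, each starting at its minimal element, and finally the orbit
of `j` (starting at `j`). -/
def colList {n : ℕ} (σ : Equiv.Perm (Fin n)) (j : Fin n) : List (Fin n) :=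
  ((otherMins σ j).reverse.map (cyc σ)).flatten ++ cyc σ j

/-- The `i`-th row determinant of a quaternionic matrix. -/
def rdet {n : ℕ} (A : Matrix (Fin n) (Fin n) ℍ[ℝ]) (i : Fin n) : ℍ[ℝ] :=
  ∑ σ : Equiv.Perm (Fin n),
    ((Equiv.Perm.sign σ : ℤ) : ℍ[ℝ]) * ((rowList σ i).map fun x => A x (σ x)).prod

/-- The `j`-th column determinant of a quaternionic matrix. -/
def cdet {n : ℕ} (A : Matrix (Fin n) (Fin n) ℍ[ℝ]) (j : Fin n) : ℍ[ℝ] :=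
  ∑ σ : Equiv.Perm (Fin n),
    ((Equiv.Perm.sign σ : ℤ) : ℍ[ℝ]) * ((colList σ j).map fun x => A x (σ x)).prod

/-- All minimal orbit representatives of `σ`, in increasing order. -/
def allMins {n : ℕ} (σ : Equiv.Perm (Fin n)) : List (Fin n) :=
  (List.finRange n).filter fun x => decide (∀ y ∈ cyc σ x, x ≤ y)

/-- The determinant of a (Hermitian) quaternionic matrix: the common value of all the
row and column determinants. -/
def detH {n : ℕ} (A : Matrix (Fin n) (Fin n) ℍ[ℝ]) : ℍ[ℝ] :=
  ∑ σ : Equiv.Perm (Fin n),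
    ((Equiv.Perm.sign σ : ℤ) : ℍ[ℝ]) *
      ((((allMins σ).map (cyc σ)).flatten).map fun x => A x (σ x)).prod

/-- The double determinant. -/
def ddet {n : ℕ} (A : Matrix (Fin n) (Fin n) ℍ[ℝ]) : ℍ[ℝ] :=
  detH (Aᴴ * A)

/-- The index of `j` in `Fin m` after deleting the index `i` from `Fin (m+1)`;
it satisfies `i.succAbove (unemb i j h) = j`. -/
def unemb {m : ℕ} (i j : Fin (m + 1)) (h : j ≠ i) : Fin m :=
  if hlt : (j : ℕ) < (i : ℕ) then ⟨(j : ℕ), by have := i.isLt; omega⟩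
  else ⟨(j : ℕ) - 1, by
    have h1 := j.isLt
    have h2 : (i : ℕ) ≠ (j : ℕ) := fun hc => h (Fin.ext hc.symm)
    omega⟩

/-- The right `ij`-th cofactor of `A`: for `j ≠ i` it is
`− rdet_j ((A^{ii})_{.j}(a_{.i}))`, the `j`-th row determinant of the matrix obtained
from `A` by replacing its `j`-th column with its `i`-th column and then deleting both
the `i`-th row and the `i`-th column; for `j = i` it is `rdet_k (A^{ii})` where `k` is
the least index different from `i` (which corresponds to the index `0` of the
submatrix). -/
def rightCof {n : ℕ} (A : Matrix (Fin (n + 2)) (Fin (n + 2)) ℍ[ℝ]) (i j : Fin (n + 2)) :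
    ℍ[ℝ] :=
  if h : j = i then rdet (A.submatrix i.succAbove i.succAbove) 0
  else
    - rdet ((A.updateCol j fun p => A p i).submatrix i.succAbove i.succAbove)
        (unemb i j h)


section RdetAux
open Equiv Function List

variable {n m : ℕ}

lemma rda_mem_pp (σ : Equiv.Perm (Fin n)) (x : Fin n) : x ∈ periodicPts ⇑σ := by
  refine ⟨orderOf σ, orderOf_pos σ, ?_⟩
  show (⇑σ)^[orderOf σ] x = x
  rw [← Equiv.Perm.coe_pow, pow_orderOf_eq_one]; rfl

lemma rda_minPos (σ : Equiv.Perm (Fin n)) (x : Fin n) : 0 < minimalPeriod (⇑σ) x :=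
  minimalPeriod_pos_of_mem_periodicPts (rda_mem_pp σ x)

lemma rda_pow_minimalPeriod (σ : Equiv.Perm (Fin n)) (x : Fin n) :
    (σ ^ minimalPeriod (⇑σ) x) x = x := by
  have := isPeriodicPt_minimalPeriod (⇑σ) x
  simpa [Equiv.Perm.coe_pow] using this

lemma rda_mem_cyc_iff {σ : Equiv.Perm (Fin n)} {x y : Fin n} :
    y ∈ cyc σ x ↔ σ.SameCycle x y := by
  constructor
  · rintro h
    simp only [cyc, List.mem_map, List.mem_range] at h
    obtain ⟨k, -, rfl⟩ := h
    exact ⟨k, rfl⟩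
  · intro h
    obtain ⟨k, hk, rfl⟩ := h.exists_pow_eq'
    simp only [cyc, List.mem_map, List.mem_range]
    refine ⟨k % minimalPeriod (⇑σ) x, Nat.mod_lt _ (rda_minPos σ x), ?_⟩
    have := iterate_mod_minimalPeriod_eq (f := ⇑σ) (x := x) (n := k)
    rw [← Equiv.Perm.coe_pow, ← Equiv.Perm.coe_pow] at this
    exact this

lemma rda_self_mem_cyc (σ : Equiv.Perm (Fin n)) (x : Fin n) : x ∈ cyc σ x :=
  rda_mem_cyc_iff.2 (Equiv.Perm.SameCycle.refl σ x)

lemma rda_pow_emb {σ : Equiv.Perm (Fin m)} {τ : Equiv.Perm (Fin n)} {emb : Fin n → Fin m}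
    {x : Fin n} (h : ∀ y, τ.SameCycle x y → σ (emb y) = emb (τ y)) (k : ℕ) :
    (σ ^ k) (emb x) = emb ((τ ^ k) x) := by
  induction k with
  | zero => rfl
  | succ k ih =>
      rw [pow_succ', Equiv.Perm.mul_apply, ih, pow_succ', Equiv.Perm.mul_apply]
      exact h _ ⟨k, rfl⟩

lemma rda_minimalPeriod_emb {σ : Equiv.Perm (Fin m)} {τ : Equiv.Perm (Fin n)}
    {emb : Fin n → Fin m} (hemb : Injective emb) {x : Fin n}
    (h : ∀ y, τ.SameCycle x y → σ (emb y) = emb (τ y)) :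
    minimalPeriod (⇑σ) (emb x) = minimalPeriod (⇑τ) x := by
  have key : ∀ k : ℕ, IsPeriodicPt (⇑σ) k (emb x) ↔ IsPeriodicPt (⇑τ) k x := by
    intro k
    unfold IsPeriodicPt IsFixedPt
    rw [← Equiv.Perm.coe_pow, ← Equiv.Perm.coe_pow, rda_pow_emb h k, hemb.eq_iff]
  have h1 := rda_minPos σ (emb x)
  have h2 := rda_minPos τ x
  refine le_antisymm ?_ ?_
  · exact Function.IsPeriodicPt.minimalPeriod_le h2 ((key _).2 (isPeriodicPt_minimalPeriod _ _))
  · exact Function.IsPeriodicPt.minimalPeriod_le h1 ((key _).1 (isPeriodicPt_minimalPeriod _ _))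

lemma rda_cyc_emb {σ : Equiv.Perm (Fin m)} {τ : Equiv.Perm (Fin n)}
    {emb : Fin n → Fin m} (hemb : Injective emb) {x : Fin n}
    (h : ∀ y, τ.SameCycle x y → σ (emb y) = emb (τ y)) :
    cyc σ (emb x) = (cyc τ x).map emb := by
  unfold cyc
  rw [rda_minimalPeriod_emb hemb h, List.map_map]
  exact List.map_congr_left fun k _ => rda_pow_emb h k

lemma rda_succAbove_unemb (i j : Fin (n + 1)) (h : j ≠ i) :
    i.succAbove (unemb i j h) = j := by
  have h2 : (i : ℕ) ≠ (j : ℕ) := fun hc => h (Fin.ext hc.symm)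
  have hj := j.isLt
  unfold unemb
  split_ifs with hlt
  · rw [Fin.succAbove_of_castSucc_lt]
    · apply Fin.ext; rfl
    · rw [Fin.lt_def]; exact hlt
  · rw [Fin.succAbove_of_le_castSucc]
    · apply Fin.ext; show (j : ℕ) - 1 + 1 = (j : ℕ); omega
    · rw [Fin.le_def]; show (i : ℕ) ≤ (j : ℕ) - 1; omega

/-- The extension of a permutation of `Fin n` to `Fin (n+1)` fixing `i`. -/
def rdaExt (i : Fin (n + 1)) (τ : Equiv.Perm (Fin n)) : Equiv.Perm (Fin (n + 1)) :=
  (finSuccEquiv' i).symm.permCongr τ.optionCongr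

@[simp] lemma rdaExt_apply_self (i : Fin (n + 1)) (τ : Equiv.Perm (Fin n)) :
    rdaExt i τ i = i := by
  simp [rdaExt, Equiv.permCongr_apply]

@[simp] lemma rdaExt_apply_succAbove (i : Fin (n + 1)) (τ : Equiv.Perm (Fin n)) (x : Fin n) :
    rdaExt i τ (i.succAbove x) = i.succAbove (τ x) := by
  simp [rdaExt, Equiv.permCongr_apply, finSuccEquiv'_succAbove, finSuccEquiv'_symm_some]

lemma rda_sign_ext (i : Fin (n + 1)) (τ : Equiv.Perm (Fin n)) :
    Equiv.Perm.sign (rdaExt i τ) = Equiv.Perm.sign τ := by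
  rw [rdaExt, Equiv.Perm.sign_permCongr, Equiv.optionCongr_sign]

/-- The bijection `(j, τ) ↦ (i j) ∘ ext τ` used for the Laplace expansion. -/
def rdaG (i : Fin (n + 1)) (p : Fin (n + 1) × Equiv.Perm (Fin n)) : Equiv.Perm (Fin (n + 1)) :=
  Equiv.swap i p.1 * rdaExt i p.2

lemma rdaG_apply_self (i : Fin (n + 1)) (j : Fin (n + 1)) (τ : Equiv.Perm (Fin n)) :
    rdaG i (j, τ) i = j := by
  simp [rdaG, Equiv.Perm.mul_apply]

lemma rdaG_bijective (i : Fin (n + 1)) : Function.Bijective (rdaG i) := by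
  rw [Fintype.bijective_iff_injective_and_card]
  constructor
  · rintro ⟨j, τ⟩ ⟨j', τ'⟩ hg
    have hj : j = j' := by
      have := congrArg (fun σ : Equiv.Perm (Fin (n+1)) => σ i) hg
      simpa [rdaG_apply_self] using this
    subst hj
    have hext : rdaExt i τ = rdaExt i τ' := by
      have hg' : Equiv.swap i j * rdaExt i τ = Equiv.swap i j * rdaExt i τ' := by
        simpa [rdaG] using hg
      exact mul_left_cancel hg'
    have : τ = τ' := by
      apply Equiv.ext; intro x
      apply Fin.succAbove_right_injective (p := i)
      have := congrArg (fun σ : Equiv.Perm (Fin (n+1)) => σ (i.succAbove x)) hext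
      simpa only [rdaExt_apply_succAbove] using this
    simp [this]
  · simp [Fintype.card_perm, Nat.factorial_succ]

lemma rda_filter_finRange (i : Fin (n + 1)) (p : Fin (n + 1) → Bool) (hpi : p i = false) :
    (List.finRange (n+1)).filter p
      = (((List.finRange n).filter fun x => p (i.succAbove x)).map i.succAbove) := by
  refine (fun hp h1 h2 => List.Perm.eq_of_pairwise' (r := (· ≤ ·)) h1 h2 hp) ?_ ?_ ?_
  · rw [List.perm_ext_iff_of_nodup ((List.nodup_finRange _).filter _)
      (((List.nodup_finRange _).filter _).map (Fin.succAbove_right_injective (p := i)))]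
    intro a
    simp only [List.mem_filter, List.mem_finRange, true_and, List.mem_map]
    constructor
    · intro ha
      have hai : a ≠ i := by rintro rfl; rw [hpi] at ha; exact absurd ha (by simp)
      obtain ⟨z, rfl⟩ := Fin.exists_succAbove_eq hai
      exact ⟨z, ⟨ha, rfl⟩⟩
    · rintro ⟨z, hz, rfl⟩
      exact hz
  · exact ((List.pairwise_lt_finRange _).sublist List.filter_sublist).imp le_of_lt
  · refine List.Pairwise.map _ (fun a b hab => ?_)
      (((List.pairwise_lt_finRange _).sublist List.filter_sublist))
    exact le_of_lt ((Fin.strictMono_succAbove i) hab)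

lemma rda_rowList_zero (τ : Equiv.Perm (Fin (n + 1))) :
    rowList τ 0 = ((allMins τ).map (cyc τ)).flatten := by
  have hall : allMins τ = 0 :: otherMins τ 0 := by
    rw [allMins, otherMins, List.finRange_succ]
    rw [List.filter_cons, List.filter_cons]
    have h0 : (0 : Fin (n+1)) ∈ cyc τ 0 := rda_self_mem_cyc τ 0
    have p0 : (decide (∀ y ∈ cyc τ 0, (0 : Fin (n+1)) ≤ y)) = true := by
      simp [Fin.zero_le]
    have q0 : (decide ((0 : Fin (n+1)) ∉ cyc τ 0 ∧ ∀ y ∈ cyc τ 0, (0:Fin (n+1)) ≤ y)) = false := by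
      simp [h0]
    rw [p0, q0]
    simp only [if_true, if_false, cond_true, cond_false]
    congr 1
    apply List.filter_congr
    intro x hx
    obtain ⟨x', -, rfl⟩ := List.mem_map.1 hx
    have hxne : Fin.succ x' ≠ 0 := Fin.succ_ne_zero x'
    apply decide_eq_decide.2
    constructor
    · intro hmin
      refine ⟨fun hmem => ?_, hmin⟩
      have : (0 : Fin (n+1)) ∈ cyc τ (Fin.succ x') :=
        rda_mem_cyc_iff.2 (rda_mem_cyc_iff.1 hmem).symm
      exact hxne (le_antisymm (hmin 0 this) (Fin.zero_le _))
    · exact fun h => h.2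
  rw [rowList, hall]
  simp

lemma rda_cyc_self_fix {i : Fin (n + 1)} {σ : Equiv.Perm (Fin (n + 1))} (h : σ i = i) :
    cyc σ i = [i] := by
  have h1 : minimalPeriod (⇑σ) i = 1 :=
    Function.minimalPeriod_eq_one_iff_isFixedPt.2 h
  simp [cyc, h1, List.range_succ]

lemma rda_rowList_fix (i : Fin (n + 2)) (τ : Equiv.Perm (Fin (n + 1))) :
    rowList (rdaExt i τ) i = i :: (rowList τ 0).map i.succAbove := by
  set σ := rdaExt i τ with hσ
  have hemb : Function.Injective i.succAbove := Fin.succAbove_right_injective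
  have hcomm : ∀ (x : Fin (n+1)) (y : Fin (n+1)), τ.SameCycle x y →
      σ (i.succAbove y) = i.succAbove (τ y) := fun x y _ => rdaExt_apply_succAbove i τ y
  have hcyci : cyc σ i = [i] := rda_cyc_self_fix (rdaExt_apply_self i τ)
  have hcycemb : ∀ x : Fin (n+1), cyc σ (i.succAbove x) = (cyc τ x).map i.succAbove :=
    fun x => rda_cyc_emb hemb (hcomm x)
  have hother : otherMins σ i = (allMins τ).map i.succAbove := by
    rw [otherMins, rda_filter_finRange i _ (by simp [hcyci, rda_self_mem_cyc])]
    rw [allMins]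
    congr 1
    apply List.filter_congr
    intro x _
    apply decide_eq_decide.2
    rw [hcycemb x, hcyci]
    constructor
    · intro hx y hy
      have := hx.2 (i.succAbove y) (List.mem_map_of_mem hy)
      exact ((Fin.strictMono_succAbove i).le_iff_le).1 this
    · intro hx
      refine ⟨by simp [Fin.succAbove_ne], ?_⟩
      intro y hy
      obtain ⟨y', hy', rfl⟩ := List.mem_map.1 hy
      exact ((Fin.strictMono_succAbove i).le_iff_le).2 (hx y' hy')
  rw [rowList, hcyci, hother, rda_rowList_zero τ]
  rw [List.map_map]
  have : (allMins τ).map (cyc σ ∘ i.succAbove) = (allMins τ).map (List.map i.succAbove ∘ cyc τ) :=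
    List.map_congr_left fun x _ => hcycemb x
  rw [this, ← List.map_map (g := List.map i.succAbove) (f := cyc τ), List.map_flatten]
  rfl

lemma rda_rowList_swap (i j : Fin (n + 2)) (h : j ≠ i) (τ : Equiv.Perm (Fin (n + 1))) :
    rowList (rdaG i (j, τ)) i = i :: (rowList τ (unemb i j h)).map i.succAbove := by
  set σ := rdaG i (j, τ) with hσ
  set j' := unemb i j h with hj'
  have hembj' : i.succAbove j' = j := rda_succAbove_unemb i j h
  have hemb : Function.Injective i.succAbove := Fin.succAbove_right_injective
  have hσi : σ i = j := rdaG_apply_self i j τ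
  have hσemb : ∀ x : Fin (n+1),
      σ (i.succAbove x) = if τ x = j' then i else i.succAbove (τ x) := by
    intro x
    show Equiv.swap i j (rdaExt i τ (i.succAbove x)) = _
    rw [rdaExt_apply_succAbove]
    by_cases hx : τ x = j'
    · rw [if_pos hx, hx, hembj', Equiv.swap_apply_right]
    · rw [if_neg hx, Equiv.swap_apply_of_ne_of_ne (Fin.succAbove_ne i (τ x))
        (fun hc => hx (hemb (hc.trans hembj'.symm)))]
  set m := minimalPeriod (⇑τ) j' with hm
  have hm0 : 0 < m := rda_minPos τ j'
  have claim : ∀ k, k < m → (σ ^ (k + 1)) i = i.succAbove ((τ ^ k) j') := by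
    intro k
    induction k with
    | zero => intro _; simpa [hembj'] using hσi
    | succ k ih =>
        intro hk
        have hk' : k < m := Nat.lt_of_succ_lt hk
        rw [pow_succ', Equiv.Perm.mul_apply, ih hk', hσemb]
        have hne : τ ((τ ^ k) j') ≠ j' := by
          intro hc
          have hper : Function.IsPeriodicPt (⇑τ) (k + 1) j' := by
            show (⇑τ)^[k+1] j' = j'
            rw [← Equiv.Perm.coe_pow, pow_succ', Equiv.Perm.mul_apply]
            exact hc
          have := hper.minimalPeriod_le (Nat.succ_pos k)
          omega
        rw [if_neg hne]
        congr 1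
        rw [pow_succ', Equiv.Perm.mul_apply]
  have hstep : τ ((τ ^ (m - 1)) j') = j' := by
    have h3 : (τ ^ ((m - 1) + 1)) j' = τ ((τ ^ (m - 1)) j') := by
      rw [pow_succ', Equiv.Perm.mul_apply]
    rw [← h3, Nat.sub_add_cancel hm0]
    exact rda_pow_minimalPeriod τ j'
  have hperiod : minimalPeriod (⇑σ) i = m + 1 := by
    have hpp : Function.IsPeriodicPt (⇑σ) (m + 1) i := by
      show (⇑σ)^[m+1] i = i
      rw [← Equiv.Perm.coe_pow]
      have hm1 : m - 1 < m := by omega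
      have h4 : (σ ^ m) i = i.succAbove ((τ ^ (m - 1)) j') := by
        have := claim (m - 1) hm1
        rwa [Nat.sub_add_cancel hm0] at this
      rw [pow_succ', Equiv.Perm.mul_apply, h4, hσemb, if_pos hstep]
    have hle : minimalPeriod (⇑σ) i ≤ m + 1 :=
      hpp.minimalPeriod_le (Nat.succ_pos m)
    have hpos : 0 < minimalPeriod (⇑σ) i := rda_minPos σ i
    by_contra hne
    have hlt : minimalPeriod (⇑σ) i ≤ m := by omega
    have hMi : (σ ^ minimalPeriod (⇑σ) i) i = i := rda_pow_minimalPeriod σ i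
    have h5 : (σ ^ minimalPeriod (⇑σ) i) i
        = i.succAbove ((τ ^ (minimalPeriod (⇑σ) i - 1)) j') := by
      have := claim (minimalPeriod (⇑σ) i - 1) (by omega)
      rwa [Nat.sub_add_cancel hpos] at this
    rw [h5] at hMi
    exact Fin.succAbove_ne i _ hMi
  have hcyci : cyc σ i = i :: (cyc τ j').map i.succAbove := by
    rw [cyc, hperiod, List.range_succ_eq_map, List.map_cons, List.map_map]
    congr 1
    rw [cyc, ← hm, List.map_map]
    apply List.map_congr_left
    intro k hk
    exact claim k (List.mem_range.1 hk)
  have hcycemb : ∀ x : Fin (n+1), x ∉ cyc τ j' →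
      cyc σ (i.succAbove x) = (cyc τ x).map i.succAbove := by
    intro x hx
    apply rda_cyc_emb hemb
    intro y hy
    rw [hσemb]
    have hne : τ y ≠ j' := by
      intro hc
      apply hx
      apply rda_mem_cyc_iff.2
      have h1 : τ.SameCycle x (τ y) := hy.trans ⟨1, by simp⟩
      rw [hc] at h1
      exact h1.symm
    rw [if_neg hne]
  have hother : otherMins σ i = (otherMins τ j').map i.succAbove := by
    rw [otherMins, rda_filter_finRange i _ (by simp [rda_self_mem_cyc])]
    rw [otherMins]
    congr 1
    apply List.filter_congr
    intro x _
    apply decide_eq_decide.2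
    by_cases hx : x ∈ cyc τ j'
    · constructor
      · intro hc
        exfalso
        apply hc.1
        rw [hcyci]
        exact List.mem_cons_of_mem _ (List.mem_map_of_mem hx)
      · intro hc
        exact absurd hx hc.1
    · rw [hcycemb x hx]
      constructor
      · intro hc
        refine ⟨hx, fun y hy => ?_⟩
        exact ((Fin.strictMono_succAbove i).le_iff_le).1
          (hc.2 (i.succAbove y) (List.mem_map_of_mem hy))
      · intro hc
        constructor
        · rw [hcyci]
          intro hmem
          rcases List.mem_cons.1 hmem with h1 | h1
          · exact Fin.succAbove_ne i x h1
          · obtain ⟨y, hy, hyx⟩ := List.mem_map.1 h1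
            exact hx (by rwa [← hemb hyx])
        · intro y hy
          obtain ⟨y', hy', rfl⟩ := List.mem_map.1 hy
          exact ((Fin.strictMono_succAbove i).le_iff_le).2 (hc.2 y' hy')
  have hmemmap : ∀ x ∈ otherMins τ j', (cyc σ ∘ i.succAbove) x
      = (List.map i.succAbove ∘ cyc τ) x := by
    intro x hx
    have h7 := List.of_mem_filter hx
    simp only [decide_eq_true_eq] at h7
    exact hcycemb x h7.1
  rw [rowList, hcyci, hother, List.map_map, List.map_congr_left hmemmap,
    ← List.map_map (g := List.map i.succAbove) (f := cyc τ), ← List.map_flatten]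
  simp [rowList]

end RdetAux

/-- The `i`-th row determinant expands by cofactors along the `i`-th row:
`rdet_i A = Σ_j a_{ij} · R_{ij}`. -/
theorem rdet_cofactor_expansion (n : ℕ) (A : Matrix (Fin (n + 2)) (Fin (n + 2)) ℍ[ℝ])
    (i : Fin (n + 2)) :
    rdet A i = ∑ j : Fin (n + 2), A i j * rightCof A i j := by
  classical
  have hsum := Fintype.sum_bijective (rdaG i) (rdaG_bijective i)
    (fun p : Fin (n+2) × Equiv.Perm (Fin (n+1)) =>
      ((Equiv.Perm.sign (rdaG i p) : ℤ) : ℍ[ℝ]) *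
        ((rowList (rdaG i p) i).map fun x => A x (rdaG i p x)).prod)
    (fun σ => ((Equiv.Perm.sign σ : ℤ) : ℍ[ℝ]) * ((rowList σ i).map fun x => A x (σ x)).prod)
    (fun p => rfl)
  rw [rdet, ← hsum, Fintype.sum_prod_type]
  apply Finset.sum_congr rfl
  intro j _
  by_cases hji : j = i
  · subst hji
    have hg : ∀ τ : Equiv.Perm (Fin (n+1)), rdaG j (j, τ) = rdaExt j τ := by
      intro τ
      apply Equiv.ext; intro x
      simp [rdaG, Equiv.swap_self]
    rw [rightCof, dif_pos rfl]
    have hterm : ∀ τ : Equiv.Perm (Fin (n+1)),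
        ((Equiv.Perm.sign (rdaG j (j,τ)) : ℤ) : ℍ[ℝ]) *
          ((rowList (rdaG j (j,τ)) j).map fun x => A x (rdaG j (j,τ) x)).prod
        = A j j * (((Equiv.Perm.sign τ : ℤ) : ℍ[ℝ]) *
            ((rowList τ 0).map fun x =>
              (A.submatrix j.succAbove j.succAbove) x (τ x)).prod) := by
      intro τ
      rw [hg τ, rda_sign_ext, rda_rowList_fix j τ]
      rw [List.map_cons, List.prod_cons, rdaExt_apply_self, List.map_map]
      have hmc : (rowList τ 0).map ((fun x => A x (rdaExt j τ x)) ∘ j.succAbove)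
          = (rowList τ 0).map (fun x => (A.submatrix j.succAbove j.succAbove) x (τ x)) := by
        apply List.map_congr_left
        intro x _
        simp [Matrix.submatrix_apply]
      rw [hmc, ← mul_assoc, (Int.cast_commute _ _).eq, mul_assoc]
    rw [Finset.sum_congr rfl (fun τ _ => hterm τ), ← Finset.mul_sum, rdet]
  · rw [rightCof, dif_neg hji]
    have hterm : ∀ τ : Equiv.Perm (Fin (n+1)),
        ((Equiv.Perm.sign (rdaG i (j,τ)) : ℤ) : ℍ[ℝ]) *
          ((rowList (rdaG i (j,τ)) i).map fun x => A x (rdaG i (j,τ) x)).prod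
        = A i j * (-(((Equiv.Perm.sign τ : ℤ) : ℍ[ℝ]) *
            ((rowList τ (unemb i j hji)).map fun x =>
              ((A.updateCol j fun p => A p i).submatrix i.succAbove i.succAbove)
                x (τ x)).prod)) := by
      intro τ
      have hembj' : i.succAbove (unemb i j hji) = j := rda_succAbove_unemb i j hji
      have hemb : Function.Injective i.succAbove := Fin.succAbove_right_injective
      have hsign : ((Equiv.Perm.sign (rdaG i (j,τ)) : ℤ) : ℍ[ℝ])
          = -((Equiv.Perm.sign τ : ℤ) : ℍ[ℝ]) := by
        have h1 : Equiv.Perm.sign (rdaG i (j,τ)) = - Equiv.Perm.sign τ := by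
          rw [rdaG, Equiv.Perm.sign_mul, Equiv.Perm.sign_swap (fun hc => hji hc.symm),
            rda_sign_ext, neg_one_mul]
        rw [h1]
        push_cast
        ring
      have hσemb : ∀ x : Fin (n+1), rdaG i (j,τ) (i.succAbove x)
          = if τ x = unemb i j hji then i else i.succAbove (τ x) := by
        intro x
        show Equiv.swap i j (rdaExt i τ (i.succAbove x)) = _
        rw [rdaExt_apply_succAbove]
        by_cases hx : τ x = unemb i j hji
        · rw [if_pos hx, hx, hembj', Equiv.swap_apply_right]
        · rw [if_neg hx, Equiv.swap_apply_of_ne_of_ne (Fin.succAbove_ne i (τ x))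
            (fun hc => hx (hemb (hc.trans hembj'.symm)))]
      rw [rda_rowList_swap i j hji τ]
      rw [List.map_cons, List.prod_cons, rdaG_apply_self, List.map_map]
      have hmc : (rowList τ (unemb i j hji)).map
            ((fun x => A x (rdaG i (j,τ) x)) ∘ i.succAbove)
          = (rowList τ (unemb i j hji)).map (fun x =>
              ((A.updateCol j fun p => A p i).submatrix i.succAbove i.succAbove)
                x (τ x)) := by
        apply List.map_congr_left
        intro x _
        show A (i.succAbove x) (rdaG i (j,τ) (i.succAbove x)) = _
        rw [hσemb x, Matrix.submatrix_apply]
        by_cases hx : τ x = unemb i j hji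
        · rw [if_pos hx, hx, hembj', Matrix.updateCol_apply, if_pos rfl]
        · rw [if_neg hx, Matrix.updateCol_apply,
            if_neg (fun hc => hx (hemb (hc.trans hembj'.symm)))]
      rw [hmc, hsign]
      rw [neg_mul, ← mul_assoc, (Int.cast_commute _ _).eq, mul_assoc, ← mul_neg]
    rw [Finset.sum_congr rfl (fun τ _ => hterm τ), ← Finset.mul_sum, rdet,
      ← Finset.sum_neg_distrib]
end
end

section
/- If the i-th row of a matrix A ∈ M(n,ℍ) is multiplied on the left by a quaternion b ∈ ℍ, then the i-th row determinant is multiplied on the left by b: rdet_i (A_{i.}(b·a_{i.})) = b · rdet_i A, for every i ∈ {1,…,n}. -/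
open Matrix Quaternion

noncomputable section

/-! In every monomial of `rdet_i`, the index `i` occurs exactly once in the cycle listing,
namely at the very front, so the only entry taken from row `i` is the leftmost factor.
Scaling row `i` on the left by `b` therefore puts `b` at the left of each monomial, where it
commutes past the real sign `±1`. -/

section

variable {n : ℕ} (σ : Equiv.Perm (Fin n))

lemma coe_cyc (x : Fin n) :
    (cyc σ x : Cycle (Fin n)) = Function.periodicOrbit σ x := by
  simp only [cyc, Function.periodicOrbit, Equiv.Perm.coe_pow]

lemma mem_cyc_iff_sameCycle (x y : Fin n) :
    y ∈ cyc σ x ↔ σ.SameCycle x y := by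
  rw [← Cycle.mem_coe_iff, coe_cyc,
    Function.mem_periodicOrbit_iff (σ.injective.mem_periodicPts x)]
  constructor
  · rintro ⟨k, rfl⟩
    exact ⟨k, by rw [zpow_natCast, Equiv.Perm.coe_pow]⟩
  · intro h
    obtain ⟨k, hk⟩ := h.exists_nat_pow_eq
    exact ⟨k, by rwa [← Equiv.Perm.coe_pow]⟩

lemma nodup_cyc (x : Fin n) : (cyc σ x).Nodup := by
  rw [← Cycle.nodup_coe_iff, coe_cyc]
  exact Function.nodup_periodicOrbit

lemma cyc_eq_cons (x : Fin n) :
    ∃ t, cyc σ x = x :: t := by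
  obtain ⟨m, hm⟩ := Nat.exists_eq_succ_of_ne_zero
    (σ.injective.mem_periodicPts x |> Function.minimalPeriod_pos_of_mem_periodicPts).ne'
  exact ⟨_, by rw [cyc, hm, List.range_succ_eq_map, List.map_cons, pow_zero]; rfl⟩

/-- The orbits listed after that of `i` are disjoint from it. -/
lemma rowList_eq_cons (i : Fin n) :
    ∃ t, rowList σ i = i :: t ∧ i ∉ t := by
  obtain ⟨c, hc⟩ := cyc_eq_cons σ i
  refine ⟨c ++ ((otherMins σ i).map (cyc σ)).flatten,
    by rw [rowList, hc, List.cons_append], ?_⟩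
  simp only [List.mem_append, List.mem_flatten, List.mem_map, not_or, not_exists, not_and]
  refine ⟨(List.nodup_cons.1 (hc ▸ nodup_cyc σ i)).1, ?_⟩
  rintro _ ⟨y, hy, rfl⟩ hiy
  simp only [otherMins, List.mem_filter, decide_eq_true_eq] at hy
  exact hy.2.1 ((mem_cyc_iff_sameCycle σ _ _).2 ((mem_cyc_iff_sameCycle σ _ _).1 hiy).symm)

end

lemma prod_map_updateRow_cons {ι R : Type*} [DecidableEq ι] [Monoid R] (A : Matrix ι ι R)
    (σ : ι → ι) (r : ι → R) {i : ι} {t : List ι} (hi : i ∉ t) :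
    ((i :: t).map fun x => A.updateRow i r x (σ x)).prod =
      r (σ i) * (t.map fun x => A x (σ x)).prod := by
  rw [List.map_cons, List.prod_cons, updateRow_self]
  congr 2
  exact List.map_congr_left fun x hx => by rw [updateRow_ne (ne_of_mem_of_not_mem hx hi)]

/-- If the `i`-th row of `A` is multiplied on the left by a quaternion `b`, then the
`i`-th row determinant is multiplied on the left by `b`. -/
theorem rdet_updateRow_smul_left (n : ℕ) (A : Matrix (Fin n) (Fin n) ℍ[ℝ]) (b : ℍ[ℝ])
    (i : Fin n) :
    rdet (A.updateRow i fun j => b * A i j) i = b * rdet A i := by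
  rw [rdet, rdet, Finset.mul_sum]
  refine Finset.sum_congr rfl fun σ _ => ?_
  obtain ⟨t, ht, hi⟩ := rowList_eq_cons σ i
  rw [ht, prod_map_updateRow_cons _ _ _ hi, List.map_cons, List.prod_cons,
    mul_assoc, (Int.cast_commute _ b).left_comm]
end
end

section
/- For any matrix A ∈ M(n,ℍ) and any i ∈ {1,…,n}, the i-th row determinant of the Hermitian adjoint A* equals the quaternion conjugate of the i-th column determinant of A: rdet_i (A*) = conj(cdet_i A). -/
open Matrix Quaternion

noncomputable section

namespace Aux

variable {n : ℕ}

lemma isPeriodicPt_iff (σ : Equiv.Perm (Fin n)) (k : ℕ) (x : Fin n) :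
    Function.IsPeriodicPt (⇑σ) k x ↔ (σ ^ k) x = x := by
  unfold Function.IsPeriodicPt Function.IsFixedPt
  rw [Equiv.Perm.coe_pow]

lemma pow_minper (σ : Equiv.Perm (Fin n)) (x : Fin n) :
    (σ ^ Function.minimalPeriod (⇑σ) x) x = x :=
  (isPeriodicPt_iff σ _ x).mp (Function.isPeriodicPt_minimalPeriod (⇑σ) x)

lemma minper_inv (σ : Equiv.Perm (Fin n)) (x : Fin n) :
    Function.minimalPeriod (⇑σ⁻¹) x = Function.minimalPeriod (⇑σ) x := by
  have key : ∀ (τ : Equiv.Perm (Fin n)) (y : Fin n),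
      Function.IsPeriodicPt (⇑τ⁻¹) (Function.minimalPeriod (⇑τ) y) y := by
    intro τ y
    rw [isPeriodicPt_iff, inv_pow, Equiv.Perm.inv_eq_iff_eq, pow_minper]
  apply Nat.dvd_antisymm
  · exact Function.IsPeriodicPt.minimalPeriod_dvd (key σ x)
  · have := key σ⁻¹ x
    rw [inv_inv] at this
    exact Function.IsPeriodicPt.minimalPeriod_dvd this

lemma inv_pow_apply (σ : Equiv.Perm (Fin n)) (x : Fin n) (k : ℕ)
    (hk : k ≤ Function.minimalPeriod (⇑σ) x) :
    (σ⁻¹ ^ k) x = (σ ^ (Function.minimalPeriod (⇑σ) x - k)) x := by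
  rw [inv_pow, Equiv.Perm.inv_eq_iff_eq, ← Equiv.Perm.mul_apply, ← pow_add]
  rw [Nat.add_sub_cancel' hk, pow_minper]

lemma cyc_inv (σ : Equiv.Perm (Fin n)) (x : Fin n) :
    cyc σ⁻¹ x = ((cyc σ x).map σ).reverse := by
  unfold cyc
  set m := Function.minimalPeriod (⇑σ) x with hm
  apply List.ext_getElem
  · simp only [List.length_map, List.length_range, List.length_reverse, minper_inv, hm]
  · intro k h1 h2
    simp only [List.length_map, List.length_range, minper_inv] at h1
    simp only [List.getElem_map, List.getElem_range, List.getElem_reverse,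
      List.length_map, List.length_range, minper_inv]
    rw [inv_pow_apply σ x k (le_of_lt h1)]
    rw [← Equiv.Perm.mul_apply, ← pow_succ']
    congr 2
    omega

lemma cyc_inv_reverse (σ : Equiv.Perm (Fin n)) (x : Fin n) :
    (cyc σ⁻¹ x).reverse = (cyc σ x).map σ := by
  rw [cyc_inv, List.reverse_reverse]

lemma mem_cyc_map (σ : Equiv.Perm (Fin n)) (x y : Fin n) :
    y ∈ (cyc σ x).map σ ↔ y ∈ cyc σ x := by
  simp only [cyc, List.mem_map, List.mem_range]
  constructor
  · rintro ⟨a, ⟨k, hk, rfl⟩, rfl⟩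
    have hstep : σ ((σ ^ k) x) = (σ ^ (k + 1)) x := by
      rw [pow_succ', Equiv.Perm.mul_apply]
    by_cases h : k + 1 = Function.minimalPeriod (⇑σ) x
    · refine ⟨0, by omega, ?_⟩
      rw [hstep, h, pow_minper, pow_zero]
      simp
    · exact ⟨k + 1, by omega, hstep.symm⟩
  · rintro ⟨k, hk, rfl⟩
    rcases k with _ | j
    · refine ⟨(σ ^ (Function.minimalPeriod (⇑σ) x - 1)) x,
        ⟨Function.minimalPeriod (⇑σ) x - 1, by omega, rfl⟩, ?_⟩
      rw [← Equiv.Perm.mul_apply, ← pow_succ', Nat.sub_add_cancel (by omega), pow_minper,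
        pow_zero]
      simp
    · exact ⟨(σ ^ j) x, ⟨j, by omega, rfl⟩, by rw [← Equiv.Perm.mul_apply, ← pow_succ']⟩

lemma mem_cyc_inv (σ : Equiv.Perm (Fin n)) (x y : Fin n) :
    y ∈ cyc σ⁻¹ x ↔ y ∈ cyc σ x := by
  rw [cyc_inv, List.mem_reverse, mem_cyc_map]

end Aux

namespace Aux

variable {n : ℕ}

lemma otherMins_inv (σ : Equiv.Perm (Fin n)) (i : Fin n) :
    otherMins σ⁻¹ i = otherMins σ i := by
  unfold otherMins
  apply List.filter_congr
  intro x _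
  rw [decide_eq_decide]
  simp only [mem_cyc_inv]

lemma colList_inv_reverse (σ : Equiv.Perm (Fin n)) (i : Fin n) :
    (colList σ⁻¹ i).reverse = (rowList σ i).map σ := by
  unfold colList rowList
  rw [List.reverse_append, List.map_append, cyc_inv_reverse, List.reverse_flatten,
    List.map_flatten, List.map_map, List.map_map, otherMins_inv, List.map_reverse,
    List.reverse_reverse]
  congr 1
  congr 1
  apply List.map_congr_left
  intro x _
  simp only [Function.comp]
  rw [cyc_inv_reverse]

lemma star_list_prod (l : List ℍ[ℝ]) :
    star l.prod = (l.reverse.map star).prod := by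
  induction l with
  | nil => simp
  | cons a t ih => simp [StarMul.star_mul, ih]

end Aux

/-- The `i`-th row determinant of the Hermitian adjoint `A*` equals the quaternion
conjugate of the `i`-th column determinant of `A`. -/
theorem rdet_conjTranspose (n : ℕ) (A : Matrix (Fin n) (Fin n) ℍ[ℝ]) (i : Fin n) :
    rdet Aᴴ i = star (cdet A i) := by
  rw [cdet, star_sum, rdet]
  apply Fintype.sum_equiv (Equiv.inv (Equiv.Perm (Fin n)))
  intro σ
  simp only [Equiv.inv_apply]
  rw [StarMul.star_mul, star_intCast, Equiv.Perm.sign_inv, ← Int.cast_comm]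
  congr 1
  rw [Aux.star_list_prod, ← List.map_reverse, Aux.colList_inv_reverse, List.map_map,
    List.map_map]
  congr 1
  apply List.map_congr_left
  intro x _
  simp [Matrix.conjTranspose_apply]
end
end

section
/- Let A ∈ M(n,ℍ) be a Hermitian matrix and suppose a left linear combination of other rows is added to the i-th row: let B = A_{i.}(a_{i.} + c_1·a_{i_1.} + … + c_k·a_{i_k.}) with c_l ∈ ℍ and indices i_1,…,i_k all different from i. Then rdet_i B = cdet_i B = det A. -/
open Matrix Quaternion

noncomputable section

namespace RDetAux
open Equiv Equiv.Perm Function List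

variable {n : ℕ}

/-- abbreviation for the minimal period -/
def per (σ : Perm (Fin n)) (x : Fin n) : ℕ := Function.minimalPeriod (⇑σ) x

lemma per_def (σ : Perm (Fin n)) (x : Fin n) : per σ x = Function.minimalPeriod (⇑σ) x := rfl

lemma mem_pp (σ : Perm (Fin n)) (x : Fin n) : x ∈ periodicPts ⇑σ := by
  refine ⟨orderOf σ, orderOf_pos σ, ?_⟩
  show (⇑σ)^[orderOf σ] x = x
  rw [← Equiv.Perm.coe_pow, pow_orderOf_eq_one]; rfl

lemma per_pos (σ : Perm (Fin n)) (x : Fin n) : 0 < per σ x :=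
  Function.minimalPeriod_pos_of_mem_periodicPts (mem_pp σ x)

lemma pow_per (σ : Perm (Fin n)) (x : Fin n) : (σ ^ per σ x) x = x := by
  have := Function.iterate_minimalPeriod (f := ⇑σ) (x := x)
  rw [per_def]
  rwa [← Equiv.Perm.coe_pow] at this

lemma pow_mod_per (σ : Perm (Fin n)) (x : Fin n) (k : ℕ) :
    (σ ^ (k % per σ x)) x = (σ ^ k) x := by
  have := Function.iterate_mod_minimalPeriod_eq (f := ⇑σ) (x := x) (n := k)
  rw [per_def]
  rwa [← Equiv.Perm.coe_pow, ← Equiv.Perm.coe_pow] at this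

lemma pow_eq_of_lt_per {σ : Perm (Fin n)} {x : Fin n} {a b : ℕ} (ha : a < per σ x)
    (hb : b < per σ x) (h : (σ ^ a) x = (σ ^ b) x) : a = b := by
  have := Function.iterate_injOn_Iio_minimalPeriod (f := ⇑σ) (x := x)
  refine this (Set.mem_Iio.2 ha) (Set.mem_Iio.2 hb) ?_
  simpa [← Equiv.Perm.coe_pow] using h

lemma cyc_def (σ : Perm (Fin n)) (x : Fin n) :
    cyc σ x = (List.range (per σ x)).map fun k => (σ ^ k) x := rfl

lemma mem_cyc {σ : Perm (Fin n)} {x y : Fin n} : y ∈ cyc σ x ↔ σ.SameCycle x y := by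
  constructor
  · rintro hy
    rw [cyc_def] at hy
    simp only [List.mem_map, List.mem_range] at hy
    obtain ⟨k, -, rfl⟩ := hy
    exact ⟨k, by simp [zpow_natCast]⟩
  · intro h
    obtain ⟨k, -, rfl⟩ := h.exists_pow_eq'
    rw [cyc_def]
    simp only [List.mem_map, List.mem_range]
    exact ⟨k % per σ x, Nat.mod_lt _ (per_pos σ x), pow_mod_per σ x k⟩

lemma self_mem_cyc (σ : Perm (Fin n)) (x : Fin n) : x ∈ cyc σ x :=
  mem_cyc.2 (SameCycle.refl σ x)

lemma cyc_nodup (σ : Perm (Fin n)) (x : Fin n) : (cyc σ x).Nodup := by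
  rw [cyc_def]
  refine List.Nodup.map_on ?_ List.nodup_range
  intro a ha b hb h
  exact pow_eq_of_lt_per (List.mem_range.1 ha) (List.mem_range.1 hb) h

lemma cyc_head (σ : Perm (Fin n)) (x : Fin n) :
    cyc σ x = x :: (List.range (per σ x - 1)).map fun k => (σ ^ (k+1)) x := by
  rw [cyc_def]
  rw [show per σ x = (per σ x - 1) + 1 from (Nat.succ_pred_eq_of_pos (per_pos σ x)).symm,
    List.range_succ_eq_map]
  simp [List.map_map, Function.comp_def, Nat.succ_eq_add_one, Nat.add_comm]

variable {A B : Matrix (Fin n) (Fin n) ℍ[ℝ]}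

/-- the cycle product of the orbit of `x`, starting at `x` -/
def Pc (A : Matrix (Fin n) (Fin n) ℍ[ℝ]) (σ : Perm (Fin n)) (x : Fin n) : ℍ[ℝ] :=
  ((cyc σ x).map fun y => A y (σ y)).prod

lemma sameCycle_pow (σ : Perm (Fin n)) (x : Fin n) (k : ℕ) : σ.SameCycle x ((σ ^ k) x) :=
  ⟨k, by simp [zpow_natCast]⟩

lemma sameCycle_pow_inv (σ : Perm (Fin n)) (x : Fin n) (k : ℕ) : σ.SameCycle x ((σ⁻¹ ^ k) x) :=
  ⟨-k, by simp [_root_.zpow_neg, zpow_natCast, inv_pow]⟩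

lemma pow_agree {σ τ : Perm (Fin n)} {x : Fin n}
    (h : ∀ y, σ.SameCycle x y → τ y = σ y) : ∀ k, (τ ^ k) x = (σ ^ k) x := by
  intro k
  induction k with
  | zero => rfl
  | succ k ih =>
      rw [pow_succ', pow_succ', Perm.mul_apply, Perm.mul_apply, ih,
        h _ (sameCycle_pow σ x k)]

lemma per_agree {σ τ : Perm (Fin n)} {x : Fin n}
    (h : ∀ y, σ.SameCycle x y → τ y = σ y) : per τ x = per σ x := by
  rw [per_def, per_def, Function.minimalPeriod_eq_minimalPeriod_iff]
  intro m
  unfold Function.IsPeriodicPt Function.IsFixedPt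
  rw [← Equiv.Perm.coe_pow, ← Equiv.Perm.coe_pow, pow_agree h]

lemma cyc_agree {σ τ : Perm (Fin n)} {x : Fin n}
    (h : ∀ y, σ.SameCycle x y → τ y = σ y) : cyc τ x = cyc σ x := by
  rw [cyc_def, cyc_def, per_agree h]
  exact List.map_congr_left fun k _ => pow_agree h k

lemma Pc_agree {σ τ : Perm (Fin n)} {x : Fin n}
    (h : ∀ y, σ.SameCycle x y → τ y = σ y)
    (hAB : ∀ y, σ.SameCycle x y → B y (τ y) = A y (σ y)) : Pc B τ x = Pc A σ x := by
  unfold Pc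
  rw [cyc_agree h]
  exact congrArg List.prod <| List.map_congr_left fun y hy => hAB y (mem_cyc.1 hy)

lemma pow_agree_inv {σ τ : Perm (Fin n)} {x : Fin n}
    (h : ∀ y, σ.SameCycle x y → τ y = σ⁻¹ y) : ∀ k, (τ ^ k) x = (σ⁻¹ ^ k) x := by
  intro k
  induction k with
  | zero => rfl
  | succ k ih =>
      rw [pow_succ', pow_succ', Perm.mul_apply, Perm.mul_apply, ih,
        h _ (sameCycle_pow_inv σ x k)]

lemma per_inv (σ : Perm (Fin n)) (x : Fin n) : per σ⁻¹ x = per σ x := by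
  rw [per_def, per_def, Function.minimalPeriod_eq_minimalPeriod_iff]
  intro m
  unfold Function.IsPeriodicPt Function.IsFixedPt
  rw [← Equiv.Perm.coe_pow, ← Equiv.Perm.coe_pow, inv_pow]
  rw [show ⇑(σ ^ m)⁻¹ x = x ↔ x = (σ ^ m) x from Equiv.Perm.inv_eq_iff_eq]
  exact eq_comm

lemma per_agree_inv {σ τ : Perm (Fin n)} {x : Fin n}
    (h : ∀ y, σ.SameCycle x y → τ y = σ⁻¹ y) : per τ x = per σ x := by
  have h2 : ∀ y, (σ⁻¹).SameCycle x y → τ y = σ⁻¹ y := fun y hy =>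
    h y (Equiv.Perm.sameCycle_inv.1 hy)
  rw [per_agree h2, per_inv]

lemma pow_inv_le {σ : Perm (Fin n)} {x : Fin n} {k : ℕ} (hk : k ≤ per σ x) :
    (σ⁻¹ ^ k) x = (σ ^ (per σ x - k)) x := by
  rw [inv_pow, Equiv.Perm.inv_eq_iff_eq, ← Equiv.Perm.mul_apply, ← pow_add]
  rw [show k + (per σ x - k) = per σ x from by omega, pow_per]

lemma Pc_entry_form (A : Matrix (Fin n) (Fin n) ℍ[ℝ]) (σ : Perm (Fin n)) (x : Fin n) :
    Pc A σ x = ((List.range (per σ x)).map fun k => A ((σ ^ k) x) ((σ ^ (k+1)) x)).prod := by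
  unfold Pc
  rw [cyc_def, List.map_map]
  congr 1
  refine List.map_congr_left fun k _ => ?_
  simp only [Function.comp_apply]
  rw [pow_succ', Perm.mul_apply]

lemma star_list_prod (l : List ℍ[ℝ]) : star l.prod = (l.reverse.map star).prod := by
  induction l with
  | nil => simp
  | cons a l ih => simp [StarMul.star_mul, ih]

lemma star_range_prod (r : ℕ) (f : ℕ → ℍ[ℝ]) :
    star ((List.range r).map f).prod
      = ((List.range r).map fun k => star (f (r - 1 - k))).prod := by
  induction r generalizing f with
  | zero => simp
  | succ r ih =>
      have L : (List.range (r+1)).map f = f 0 :: (List.range r).map (fun k => f (k+1)) := by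
        rw [List.range_succ_eq_map, List.map_cons, List.map_map]
        rfl
      have R : (List.range (r+1)).map (fun k => star (f (r+1-1-k)))
          = ((List.range r).map (fun k => star (f (r+1-1-k)))) ++ [star (f 0)] := by
        rw [List.range_succ, List.map_append]
        simp
      rw [L, R, List.prod_cons, List.prod_append, StarMul.star_mul, ih (fun k => f (k+1))]
      simp only [List.prod_cons, List.prod_nil, mul_one]
      congr 1
      refine congrArg List.prod <| List.map_congr_left fun k hk => ?_
      have : k < r := List.mem_range.1 hk
      congr 2
      omega

lemma herm_entry (hA : Aᴴ = A) (p q : Fin n) : star (A p q) = A q p := by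
  conv_rhs => rw [← hA]
  rw [Matrix.conjTranspose_apply]

lemma Pc_star {σ τ : Perm (Fin n)} {x : Fin n} (hA : Aᴴ = A)
    (h : ∀ y, σ.SameCycle x y → τ y = σ⁻¹ y) : Pc A τ x = star (Pc A σ x) := by
  rw [Pc_entry_form, Pc_entry_form, per_agree_inv h, star_range_prod]
  refine congrArg List.prod <| List.map_congr_left fun k hk => ?_
  have hk' : k < per σ x := List.mem_range.1 hk
  have e1 : (τ ^ k) x = (σ ^ (per σ x - k)) x := by
    rw [pow_agree_inv h, pow_inv_le (by omega)]
  have e2 : (τ ^ (k+1)) x = (σ ^ (per σ x - (k+1))) x := by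
    rw [pow_agree_inv h, pow_inv_le (by omega)]
  rw [e1, e2, herm_entry hA,
    show per σ x - 1 - k + 1 = per σ x - k from by omega,
    show per σ x - (k+1) = per σ x - 1 - k from by omega]

lemma re_mul_comm (a b : ℍ[ℝ]) : (a * b).re = (b * a).re := by
  simp only [Quaternion.re_mul]
  ring

lemma Pc_re_apply (A : Matrix (Fin n) (Fin n) ℍ[ℝ]) (σ : Perm (Fin n)) (x : Fin n) :
    (Pc A σ (σ x)).re = (Pc A σ x).re := by
  have hper : per σ (σ x) = per σ x := by
    rw [per_def, per_def, Function.minimalPeriod_apply (mem_pp σ x)]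
  obtain ⟨r, hr⟩ : ∃ r, per σ x = r + 1 := ⟨per σ x - 1, by have := per_pos σ x; omega⟩
  have hpow : (σ ^ (r+1)) x = x := by rw [← hr, pow_per]
  set f : ℕ → ℍ[ℝ] := fun k => A ((σ ^ k) x) ((σ ^ (k+1)) x) with hf
  have h1 : Pc A σ x = f 0 * ((List.range r).map fun k => f (k+1)).prod := by
    rw [Pc_entry_form, hr, List.range_succ_eq_map, List.map_cons, List.prod_cons, List.map_map]
    rfl
  have h2 : Pc A σ (σ x) = ((List.range r).map fun k => f (k+1)).prod * f 0 := by
    rw [Pc_entry_form, hper, hr]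
    have hcg : ∀ k ∈ List.range (r+1), A ((σ ^ k) (σ x)) ((σ ^ (k+1)) (σ x)) = f (k+1) := by
      intro k _
      have e : ∀ m : ℕ, (σ ^ m) (σ x) = (σ ^ (m+1)) x := by
        intro m; rw [pow_succ, Perm.mul_apply]
      rw [e, e]
    rw [List.map_congr_left hcg, List.range_succ, List.map_append, List.prod_append]
    simp only [List.map_cons, List.map_nil, List.prod_cons, List.prod_nil, mul_one]
    congr 1
    show f (r+1) = f 0
    rw [hf]
    simp only
    have e1 : (σ ^ (r + 1 + 1)) x = σ x := by
      rw [pow_succ', Perm.mul_apply, hpow]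
    rw [hpow, e1, pow_zero, pow_one]
    rfl
  rw [h1, h2, re_mul_comm]

lemma Pc_re_sameCycle {σ : Perm (Fin n)} {x y : Fin n} (h : σ.SameCycle x y) :
    (Pc A σ y).re = (Pc A σ x).re := by
  obtain ⟨k, -, rfl⟩ := h.exists_pow_eq'
  induction k with
  | zero => rfl
  | succ k ih =>
      rw [pow_succ', Perm.mul_apply, Pc_re_apply]
      exact ih (sameCycle_pow σ x k)

/-! ### Inverting a single cycle -/

/-- the permutation obtained from `σ` by inverting the cycle of `z` -/
def invCyc (σ : Perm (Fin n)) (z : Fin n) : Perm (Fin n) :=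
  σ * ((σ.cycleOf z)⁻¹) ^ 2

lemma sc_apply (σ : Perm (Fin n)) (x : Fin n) : σ.SameCycle x (σ x) := ⟨1, by simp⟩

lemma sc_inv_apply (σ : Perm (Fin n)) (x : Fin n) : σ.SameCycle x (σ⁻¹ x) :=
  ⟨-1, by simp [_root_.zpow_neg]⟩

lemma invCyc_apply_mem {σ : Perm (Fin n)} {z x : Fin n} (h : σ.SameCycle z x) :
    invCyc σ z x = σ⁻¹ x := by
  have h1 : (σ.cycleOf z)⁻¹ x = σ⁻¹ x := by
    rw [Equiv.Perm.inv_eq_iff_eq, Equiv.Perm.cycleOf_apply,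
      if_pos (h.trans (sc_inv_apply σ x))]
    simp
  have h2 : (σ.cycleOf z)⁻¹ (σ⁻¹ x) = σ⁻¹ (σ⁻¹ x) := by
    rw [Equiv.Perm.inv_eq_iff_eq, Equiv.Perm.cycleOf_apply,
      if_pos ((h.trans (sc_inv_apply σ x)).trans (sc_inv_apply σ (σ⁻¹ x)))]
    simp
  show σ (((σ.cycleOf z)⁻¹ * (σ.cycleOf z)⁻¹) x) = σ⁻¹ x
  rw [Perm.mul_apply, h1, h2]
  simp

lemma invCyc_apply_not_mem {σ : Perm (Fin n)} {z x : Fin n} (h : ¬ σ.SameCycle z x) :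
    invCyc σ z x = σ x := by
  have h1 : (σ.cycleOf z)⁻¹ x = x := by
    rw [Equiv.Perm.inv_eq_iff_eq, Equiv.Perm.cycleOf_apply_of_not_sameCycle h]
  show σ (((σ.cycleOf z)⁻¹ * (σ.cycleOf z)⁻¹) x) = σ x
  rw [Perm.mul_apply, h1, h1]

lemma invCyc_sign (σ : Perm (Fin n)) (z : Fin n) :
    Equiv.Perm.sign (invCyc σ z) = Equiv.Perm.sign σ := by
  unfold invCyc
  rw [Equiv.Perm.sign_mul, MonoidHom.map_pow, Int.units_sq, mul_one]

lemma sameCycle_step1 (σ : Perm (Fin n)) (z x : Fin n) : σ.SameCycle x (invCyc σ z x) := by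
  by_cases h : σ.SameCycle z x
  · rw [invCyc_apply_mem h]; exact sc_inv_apply σ x
  · rw [invCyc_apply_not_mem h]; exact sc_apply σ x

lemma sameCycle_step2 (σ : Perm (Fin n)) (z x : Fin n) : (invCyc σ z).SameCycle x (σ x) := by
  by_cases h : σ.SameCycle z x
  · have key : invCyc σ z (σ x) = x := by
      rw [invCyc_apply_mem (h.trans (sc_apply σ x))]
      simp
    have : (invCyc σ z)⁻¹ x = σ x := by
      rw [Equiv.Perm.inv_eq_iff_eq]
      exact key.symm
    exact this ▸ sc_inv_apply (invCyc σ z) x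
  · rw [← invCyc_apply_not_mem h]
    exact sc_apply (invCyc σ z) x

lemma sameCycle_invCyc (σ : Perm (Fin n)) (z : Fin n) (x y : Fin n) :
    (invCyc σ z).SameCycle x y ↔ σ.SameCycle x y := by
  constructor
  · intro h
    obtain ⟨k, -, rfl⟩ := h.exists_pow_eq'
    clear h
    induction k with
    | zero => exact SameCycle.refl _ _
    | succ k ih =>
        rw [pow_succ', Perm.mul_apply]
        exact ih.trans (sameCycle_step1 σ z _)
  · intro h
    obtain ⟨k, -, rfl⟩ := h.exists_pow_eq'
    clear h
    induction k with
    | zero => exact SameCycle.refl _ _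
    | succ k ih =>
        rw [pow_succ', Perm.mul_apply]
        exact ih.trans (sameCycle_step2 σ z _)

lemma mem_cyc_invCyc (σ : Perm (Fin n)) (z : Fin n) (x y : Fin n) :
    y ∈ cyc (invCyc σ z) x ↔ y ∈ cyc σ x := by
  rw [mem_cyc, mem_cyc, sameCycle_invCyc]

lemma invCyc_invCyc (σ : Perm (Fin n)) (z : Fin n) : invCyc (invCyc σ z) z = σ := by
  set τ := invCyc σ z with hτ
  apply Equiv.ext
  intro x
  by_cases h : σ.SameCycle z x
  · have hτzx : τ.SameCycle z x := (sameCycle_invCyc σ z z x).2 h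
    rw [invCyc_apply_mem hτzx, Equiv.Perm.inv_eq_iff_eq, hτ,
      invCyc_apply_mem (h.trans (sc_apply σ x))]
    simp
  · have hτzx : ¬ τ.SameCycle z x := fun hc => h ((sameCycle_invCyc σ z z x).1 hc)
    rw [invCyc_apply_not_mem hτzx, hτ, invCyc_apply_not_mem h]

lemma cyc_invCyc_not_mem {σ : Perm (Fin n)} {z x : Fin n} (h : ¬ σ.SameCycle z x) :
    cyc (invCyc σ z) x = cyc σ x :=
  cyc_agree fun y hy => invCyc_apply_not_mem fun hc => h (hc.trans hy.symm)

lemma Pc_invCyc_not_mem {σ : Perm (Fin n)} {z x : Fin n}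
    (A : Matrix (Fin n) (Fin n) ℍ[ℝ]) (h : ¬ σ.SameCycle z x) :
    Pc A (invCyc σ z) x = Pc A σ x :=
  Pc_agree (fun y hy => invCyc_apply_not_mem fun hc => h (hc.trans hy.symm))
    (fun y hy => by rw [invCyc_apply_not_mem fun hc => h (hc.trans hy.symm)])

lemma Pc_invCyc_mem {σ : Perm (Fin n)} {z x : Fin n} (hA : A.conjTranspose = A)
    (h : σ.SameCycle z x) : Pc A (invCyc σ z) x = star (Pc A σ x) :=
  Pc_star hA fun y hy => invCyc_apply_mem (h.trans hy)

/-! ### minimal representatives -/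

lemma mem_otherMins {σ : Perm (Fin n)} {i x : Fin n} :
    x ∈ otherMins σ i ↔ (x ∉ cyc σ i ∧ ∀ y ∈ cyc σ x, x ≤ y) := by
  simp [otherMins, List.mem_filter]

lemma mem_allMins {σ : Perm (Fin n)} {x : Fin n} :
    x ∈ allMins σ ↔ ∀ y ∈ cyc σ x, x ≤ y := by
  simp [allMins, List.mem_filter]

lemma otherMins_nodup (σ : Perm (Fin n)) (i : Fin n) : (otherMins σ i).Nodup :=
  (List.nodup_finRange n).filter _

lemma allMins_nodup (σ : Perm (Fin n)) : (allMins σ).Nodup :=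
  (List.nodup_finRange n).filter _

lemma otherMins_length_le (σ : Perm (Fin n)) (i : Fin n) : (otherMins σ i).length ≤ n := by
  simpa [otherMins] using (List.length_filter_le _ (List.finRange n))

lemma allMins_length_le (σ : Perm (Fin n)) : (allMins σ).length ≤ n := by
  simpa [allMins] using (List.length_filter_le _ (List.finRange n))

lemma min_eq_of_sameCycle {σ : Perm (Fin n)} {x₁ x₂ : Fin n}
    (h1 : ∀ y ∈ cyc σ x₁, x₁ ≤ y) (h2 : ∀ y ∈ cyc σ x₂, x₂ ≤ y)
    (h : σ.SameCycle x₁ x₂) : x₁ = x₂ :=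
  le_antisymm (h1 _ (mem_cyc.2 h)) (h2 _ (mem_cyc.2 h.symm))

/-- invariance of `otherMins` under a cycle-membership-preserving modification -/
lemma otherMins_congr {σ τ : Perm (Fin n)} (i : Fin n)
    (hcyc : ∀ x y, y ∈ cyc τ x ↔ y ∈ cyc σ x) : otherMins τ i = otherMins σ i := by
  unfold otherMins
  refine List.filter_congr fun x _ => ?_
  refine decide_eq_decide.2 ?_
  rw [hcyc]
  constructor
  · rintro ⟨h1, h2⟩; exact ⟨h1, fun y hy => h2 y ((hcyc x y).2 hy)⟩
  · rintro ⟨h1, h2⟩; exact ⟨h1, fun y hy => h2 y ((hcyc x y).1 hy)⟩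

lemma allMins_congr {σ τ : Perm (Fin n)}
    (hcyc : ∀ x y, y ∈ cyc τ x ↔ y ∈ cyc σ x) : allMins τ = allMins σ := by
  unfold allMins
  refine List.filter_congr fun x _ => ?_
  refine decide_eq_decide.2 ?_
  constructor
  · rintro h2 y hy; exact h2 y ((hcyc x y).2 hy)
  · rintro h2 y hy; exact h2 y ((hcyc x y).1 hy)

/-! ### the minimum of an orbit -/

def orbMin (σ : Perm (Fin n)) (i : Fin n) : Fin n :=
  ((cyc σ i).toFinset).min' ⟨i, List.mem_toFinset.2 (self_mem_cyc σ i)⟩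

lemma orbMin_mem (σ : Perm (Fin n)) (i : Fin n) : orbMin σ i ∈ cyc σ i :=
  List.mem_toFinset.1 (Finset.min'_mem _ _)

lemma orbMin_le (σ : Perm (Fin n)) (i : Fin n) : ∀ y ∈ cyc σ i, orbMin σ i ≤ y :=
  fun _ hy => Finset.min'_le _ _ (List.mem_toFinset.2 hy)

lemma orbMin_sameCycle (σ : Perm (Fin n)) (i : Fin n) : σ.SameCycle i (orbMin σ i) :=
  mem_cyc.1 (orbMin_mem σ i)

lemma orbMin_min (σ : Perm (Fin n)) (i : Fin n) :
    ∀ y ∈ cyc σ (orbMin σ i), orbMin σ i ≤ y := by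
  intro y hy
  exact orbMin_le σ i y (mem_cyc.2 ((orbMin_sameCycle σ i).trans (mem_cyc.1 hy)))

lemma orbMin_mem_allMins (σ : Perm (Fin n)) (i : Fin n) : orbMin σ i ∈ allMins σ :=
  mem_allMins.2 (orbMin_min σ i)

lemma nodup_singleton_of_mem {l : List (Fin n)} {m : Fin n} (hnd : l.Nodup)
    (hm : m ∈ l) (hall : ∀ x ∈ l, x = m) : l = [m] := by
  cases l with
  | nil => exact absurd hm List.not_mem_nil
  | cons a t =>
      have ha : a = m := hall a List.mem_cons_self
      subst ha
      have ht : t = [] := by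
        rw [List.eq_nil_iff_forall_not_mem]
        intro y hy
        have : y = a := hall y (List.mem_cons_of_mem a hy)
        subst this
        exact (List.nodup_cons.1 hnd).1 hy
      rw [ht]

lemma allMins_filter_eq (σ : Perm (Fin n)) (i : Fin n) :
    (allMins σ).filter (fun x => decide (x ∈ cyc σ i)) = [orbMin σ i] := by
  refine nodup_singleton_of_mem ((allMins_nodup σ).filter _) ?_ ?_
  · rw [List.mem_filter]
    exact ⟨orbMin_mem_allMins σ i, by simp [orbMin_mem σ i]⟩
  · intro x hx
    rw [List.mem_filter] at hx
    obtain ⟨hx1, hx2⟩ := hx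
    have hx2' : x ∈ cyc σ i := by simpa using hx2
    exact min_eq_of_sameCycle (mem_allMins.1 hx1) (orbMin_min σ i)
      ((mem_cyc.1 hx2').symm.trans (orbMin_sameCycle σ i))

lemma otherMins_eq_filter (σ : Perm (Fin n)) (i : Fin n) :
    otherMins σ i = (allMins σ).filter (fun x => decide ¬(x ∈ cyc σ i)) := by
  unfold otherMins allMins
  rw [List.filter_filter]
  refine List.filter_congr fun x _ => ?_
  simp [Bool.and_comm]

lemma allMins_prod_split (σ : Perm (Fin n)) (i : Fin n) (f : Fin n → ℝ) :
    ((allMins σ).map f).prod = f (orbMin σ i) * ((otherMins σ i).map f).prod := by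
  have h := List.prod_map_filter_mul_prod_map_filter_not (l := allMins σ)
    (fun x => x ∈ cyc σ i) f
  rw [allMins_filter_eq σ i, ← otherMins_eq_filter σ i] at h
  simpa using h.symm

lemma allMins_length (σ : Perm (Fin n)) (i : Fin n) :
    (allMins σ).length = (otherMins σ i).length + 1 := by
  have h := List.length_eq_length_filter_add (l := allMins σ)
    (fun x => decide (x ∈ cyc σ i))
  rw [allMins_filter_eq σ i] at h
  rw [otherMins_eq_filter σ i]
  have e : (allMins σ).filter (fun x => decide ¬(x ∈ cyc σ i))
      = (allMins σ).filter (fun x => !decide (x ∈ cyc σ i)) := by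
    refine List.filter_congr fun x _ => ?_
    simp
  rw [e, h, List.length_singleton]
  omega

/-! ### the symmetrization engine -/

def sgn (σ : Perm (Fin n)) : ℝ := ((Equiv.Perm.sign σ : ℤ) : ℝ)

lemma sgn_invCyc (σ : Perm (Fin n)) (z : Fin n) : sgn (invCyc σ z) = sgn σ := by
  unfold sgn; rw [invCyc_sign]

lemma smul_sandwich (a : ℝ) (x y d : ℍ[ℝ]) : x * (a • d) * y = a • (x * d * y) := by
  rw [mul_smul_comm, smul_mul_assoc]

lemma normal_form (s a : ℝ) (x y d : ℍ[ℝ]) :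
    s • (x * (a • d) * y) = (s * a) • (x * d * y) := by
  rw [smul_sandwich, smul_smul]

lemma hfactor (x y a b d : ℍ[ℝ]) :
    x * (a * d) * y + x * (b * d) * y = x * ((a + b) * d) * y := by
  noncomm_ring

/-- partial symmetrization scalar -/
def symR (A : Matrix (Fin n) (Fin n) ℍ[ℝ]) (σ : Perm (Fin n)) (L : List (Fin n))
    (T : ℕ) : ℝ :=
  2^(T - L.length) * ((L.take T).map fun w => 2 * (Pc A σ w).re).prod

lemma engine (A : Matrix (Fin n) (Fin n) ℍ[ℝ]) (Ms : Perm (Fin n) → List (Fin n))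
    (Fl Fr : Perm (Fin n) → ℍ[ℝ])
    (hnd : ∀ σ, (Ms σ).Nodup)
    (hstep : ∀ (σ : Perm (Fin n)), ∀ z ∈ Ms σ,
      Ms (invCyc σ z) = Ms σ ∧ Fl (invCyc σ z) = Fl σ ∧ Fr (invCyc σ z) = Fr σ ∧
      (∀ w ∈ Ms σ, w ≠ z → Pc A (invCyc σ z) w = Pc A σ w) ∧
      Pc A (invCyc σ z) z = star (Pc A σ z)) :
    ∀ T : ℕ,
      (2^T : ℝ) • (∑ σ : Perm (Fin n), sgn σ • (Fl σ * ((Ms σ).map (Pc A σ)).prod * Fr σ))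
      = ∑ σ : Perm (Fin n), (sgn σ * symR A σ (Ms σ) T) •
          (Fl σ * (((Ms σ).drop T).map (Pc A σ)).prod * Fr σ) := by
  intro T
  induction T with
  | zero =>
      simp [symR]
  | succ T ih =>
      set F : Perm (Fin n) → ℍ[ℝ] := fun σ =>
        (sgn σ * symR A σ (Ms σ) T) •
          (Fl σ * (((Ms σ).drop T).map (Pc A σ)).prod * Fr σ) with hF
      set G : Perm (Fin n) → ℍ[ℝ] := fun σ =>
        (sgn σ * symR A σ (Ms σ) (T+1)) •
          (Fl σ * (((Ms σ).drop (T+1)).map (Pc A σ)).prod * Fr σ) with hG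
      set h : Perm (Fin n) → Perm (Fin n) := fun σ =>
        if ht : T < (Ms σ).length then invCyc σ ((Ms σ).get ⟨T, ht⟩) else σ with hh
      have hinv : Function.Involutive h := by
        intro σ
        by_cases ht : T < (Ms σ).length
        · have hzmem : (Ms σ).get ⟨T, ht⟩ ∈ Ms σ := List.get_mem _ _
          obtain ⟨hMs, -, -, -, -⟩ := hstep σ _ hzmem
          simp only [hh]
          rw [dif_pos ht]
          have ht' : T < (Ms (invCyc σ ((Ms σ).get ⟨T, ht⟩))).length := by
            rw [hMs]; exact ht
          rw [dif_pos ht', List.get_of_eq hMs, invCyc_invCyc]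
        · simp only [hh]
          rw [dif_neg ht, dif_neg ht]
      have hFh : ∀ σ, F σ + F (h σ) = G σ := by
        intro σ
        by_cases ht : T < (Ms σ).length
        · set z := (Ms σ).get ⟨T, ht⟩ with hzdef
          have hzmem : z ∈ Ms σ := List.get_mem _ _
          obtain ⟨hMs, hFl, hFr, hPo, hPz⟩ := hstep σ z hzmem
          have hhσ : h σ = invCyc σ z := by simp only [hh]; rw [dif_pos ht]
          have hdrop : (Ms σ).drop T = z :: (Ms σ).drop (T+1) := by
            rw [List.drop_eq_getElem_cons ht]
            rfl
          have htake1 : (Ms σ).take (T+1) = (Ms σ).take T ++ [z] := by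
            rw [List.take_succ]
            congr 1
            rw [List.getElem?_eq_getElem ht]
            rfl
          -- nodup consequences
          have hsplit : ((Ms σ).take T ++ (z :: (Ms σ).drop (T+1))).Nodup := by
            rw [← hdrop, List.take_append_drop]
            exact hnd σ
          have hzntake : z ∉ (Ms σ).take T := by
            intro hc
            exact (List.disjoint_of_nodup_append hsplit) hc List.mem_cons_self
          have hznd : z ∉ (Ms σ).drop (T+1) := by
            have := (List.nodup_append.1 hsplit).2.1
            exact (List.nodup_cons.1 this).1
          -- value computations for h σ
          have hsgn : sgn (h σ) = sgn σ := by rw [hhσ, sgn_invCyc]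
          have hsym : symR A (h σ) (Ms (h σ)) T = symR A σ (Ms σ) T := by
            rw [hhσ, hMs]
            unfold symR
            congr 1
            refine congrArg List.prod <| List.map_congr_left fun w hw => ?_
            have hwm : w ∈ Ms σ := List.mem_of_mem_take hw
            have hwz : w ≠ z := fun hc => hzntake (hc ▸ hw)
            rw [hPo w hwm hwz]
          have hFlh : Fl (h σ) = Fl σ := by rw [hhσ, hFl]
          have hFrh : Fr (h σ) = Fr σ := by rw [hhσ, hFr]
          have hdroph : (((Ms (h σ)).drop T).map (Pc A (h σ))).prod
              = star (Pc A σ z) * (((Ms σ).drop (T+1)).map (Pc A σ)).prod := by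
            rw [hhσ, hMs, hdrop]
            simp only [List.map_cons, List.prod_cons]
            rw [hPz]
            congr 1
            refine congrArg List.prod <| List.map_congr_left fun w hw => ?_
            have hwm : w ∈ Ms σ := List.mem_of_mem_drop hw
            have hwz : w ≠ z := fun hc => hznd (hc ▸ hw)
            rw [hPo w hwm hwz]
          have hdropσ : (((Ms σ).drop T).map (Pc A σ)).prod
              = Pc A σ z * (((Ms σ).drop (T+1)).map (Pc A σ)).prod := by
            rw [hdrop]; simp
          rw [hF, hG]
          simp only
          rw [hsgn, hsym, hFlh, hFrh, hhσ] at *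
          rw [hdroph, hdropσ, ← smul_add, hfactor, Quaternion.self_add_star',
            Quaternion.coe_mul_eq_smul, smul_sandwich, smul_smul]
          have hsym1 : symR A σ (Ms σ) (T+1)
              = symR A σ (Ms σ) T * (2 * (Pc A σ z).re) := by
            unfold symR
            rw [htake1, List.map_append, List.prod_append]
            simp only [List.map_cons, List.map_nil, List.prod_cons, List.prod_nil, mul_one]
            rw [show T + 1 - (Ms σ).length = T - (Ms σ).length from by omega]
            ring
          rw [hsym1]
          ring_nf
        · have hhσ : h σ = σ := by simp only [hh]; rw [dif_neg ht]
          have hlen' : (Ms σ).length ≤ T := le_of_not_gt ht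
          have hdropT : (Ms σ).drop T = [] := List.drop_eq_nil_of_le hlen'
          have hdropT1 : (Ms σ).drop (T+1) = [] := List.drop_eq_nil_of_le (by omega)
          have hsym1 : symR A σ (Ms σ) (T+1) = 2 * symR A σ (Ms σ) T := by
            unfold symR
            rw [List.take_of_length_le hlen', List.take_of_length_le (by omega),
              show T + 1 - (Ms σ).length = (T - (Ms σ).length) + 1 from by omega, pow_succ]
            ring
          rw [hF, hG]
          simp only
          rw [hhσ, hdropT, hdropT1, hsym1, ← add_smul]
          ring_nf
      calc (2^(T+1) : ℝ) • (∑ σ : Perm (Fin n),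
              sgn σ • (Fl σ * ((Ms σ).map (Pc A σ)).prod * Fr σ))
          = (2:ℝ) • ((2^T : ℝ) • (∑ σ : Perm (Fin n),
              sgn σ • (Fl σ * ((Ms σ).map (Pc A σ)).prod * Fr σ))) := by
            rw [smul_smul, ← pow_succ']
        _ = (2:ℝ) • (∑ σ : Perm (Fin n), F σ) := by rw [ih]
        _ = ∑ σ : Perm (Fin n), F σ + ∑ σ : Perm (Fin n), F (h σ) := by
            rw [two_smul]
            congr 1
            exact (Fintype.sum_bijective h hinv.bijective _ _ (fun σ => rfl)).symm
        _ = ∑ σ : Perm (Fin n), (F σ + F (h σ)) := Finset.sum_add_distrib.symm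
        _ = ∑ σ : Perm (Fin n), G σ := Finset.sum_congr rfl (fun σ _ => hFh σ)

/-! ### determinants in engine form -/

lemma sign_cast_mul (σ : Perm (Fin n)) (X : ℍ[ℝ]) :
    ((Equiv.Perm.sign σ : ℤ) : ℍ[ℝ]) * X = sgn σ • X := by
  rw [sgn, ← Quaternion.coe_intCast, Quaternion.coe_mul_eq_smul]

lemma mem_cyc_ne_of_not_mem {σ : Perm (Fin n)} {i m x : Fin n}
    (hm : m ∉ cyc σ i) (hx : x ∈ cyc σ m) : x ≠ i := by
  rintro rfl
  exact hm (mem_cyc.2 (mem_cyc.1 hx).symm)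

lemma block_prod_eq {M A : Matrix (Fin n) (Fin n) ℍ[ℝ]} {i : Fin n}
    (hMA : ∀ p q, p ≠ i → M p q = A p q) {σ : Perm (Fin n)} {L : List (Fin n)}
    (hL : ∀ m ∈ L, m ∉ cyc σ i) :
    (((L.map (cyc σ)).flatten).map fun x => M x (σ x)).prod
      = (L.map (Pc A σ)).prod := by
  rw [List.map_flatten, List.prod_flatten, List.map_map, List.map_map]
  refine congrArg List.prod <| List.map_congr_left fun m hm => ?_
  simp only [Function.comp_apply]
  refine congrArg List.prod <| List.map_congr_left fun x hx => ?_
  exact hMA x (σ x) (mem_cyc_ne_of_not_mem (hL m hm) hx)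

lemma rdet_engine_form {M A : Matrix (Fin n) (Fin n) ℍ[ℝ]} {i : Fin n}
    (hMA : ∀ p q, p ≠ i → M p q = A p q) :
    rdet M i = ∑ σ : Equiv.Perm (Fin n),
      sgn σ • (Pc M σ i * ((otherMins σ i).map (Pc A σ)).prod * 1) := by
  unfold rdet rowList
  refine Finset.sum_congr rfl fun σ _ => ?_
  rw [sign_cast_mul]
  congr 1
  rw [List.map_append, List.prod_append, mul_one,
    block_prod_eq hMA fun m hm => (mem_otherMins.1 hm).1]
  rfl

lemma cdet_engine_form {M A : Matrix (Fin n) (Fin n) ℍ[ℝ]} {i : Fin n}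
    (hMA : ∀ p q, p ≠ i → M p q = A p q) :
    cdet M i = ∑ σ : Equiv.Perm (Fin n),
      sgn σ • (1 * (((otherMins σ i).reverse).map (Pc A σ)).prod * Pc M σ i) := by
  unfold cdet colList
  refine Finset.sum_congr rfl fun σ _ => ?_
  rw [sign_cast_mul]
  congr 1
  rw [List.map_append, List.prod_append, one_mul,
    block_prod_eq hMA fun m hm => (mem_otherMins.1 (List.mem_reverse.1 hm)).1]
  rfl

lemma detH_engine_form (A : Matrix (Fin n) (Fin n) ℍ[ℝ]) :
    detH A = ∑ σ : Equiv.Perm (Fin n),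
      sgn σ • ((1:ℍ[ℝ]) * ((allMins σ).map (Pc A σ)).prod * 1) := by
  unfold detH
  refine Finset.sum_congr rfl fun σ _ => ?_
  rw [sign_cast_mul]
  congr 1
  rw [one_mul, mul_one, List.map_flatten, List.prod_flatten, List.map_map, List.map_map]
  rfl

/-! ### engine hypotheses for the concrete lists -/

lemma not_sameCycle_of_mem_otherMins {σ : Perm (Fin n)} {i z : Fin n}
    (hz : z ∈ otherMins σ i) : ¬ σ.SameCycle z i := by
  intro hc
  exact (mem_otherMins.1 hz).1 (mem_cyc.2 hc.symm.symm.symm)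

lemma otherMins_pair_not_sameCycle {σ : Perm (Fin n)} {i z w : Fin n}
    (hz : z ∈ otherMins σ i) (hw : w ∈ otherMins σ i) (hne : w ≠ z) :
    ¬ σ.SameCycle z w := fun hc =>
  hne (min_eq_of_sameCycle (mem_otherMins.1 hw).2 (mem_otherMins.1 hz).2 hc.symm)

lemma allMins_pair_not_sameCycle {σ : Perm (Fin n)} {z w : Fin n}
    (hz : z ∈ allMins σ) (hw : w ∈ allMins σ) (hne : w ≠ z) :
    ¬ σ.SameCycle z w := fun hc =>
  hne (min_eq_of_sameCycle (mem_allMins.1 hw) (mem_allMins.1 hz) hc.symm)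

lemma hstep_otherMins {A M : Matrix (Fin n) (Fin n) ℍ[ℝ]} (hA : Aᴴ = A)
    (i : Fin n) :
    ∀ (σ : Perm (Fin n)), ∀ z ∈ otherMins σ i,
      otherMins (invCyc σ z) i = otherMins σ i ∧
      Pc M (invCyc σ z) i = Pc M σ i ∧
      ((fun _ : Perm (Fin n) => (1:ℍ[ℝ])) (invCyc σ z) = 1) ∧
      (∀ w ∈ otherMins σ i, w ≠ z → Pc A (invCyc σ z) w = Pc A σ w) ∧
      Pc A (invCyc σ z) z = star (Pc A σ z) := by
  intro σ z hz
  refine ⟨otherMins_congr i (mem_cyc_invCyc σ z), 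
    Pc_invCyc_not_mem M (not_sameCycle_of_mem_otherMins hz), rfl,
    fun w hw hne => Pc_invCyc_not_mem A (otherMins_pair_not_sameCycle hz hw hne),
    Pc_invCyc_mem hA (SameCycle.refl σ z)⟩

lemma drop_len_le {L : List (Fin n)} (h : L.length ≤ n) : L.drop n = [] :=
  List.drop_eq_nil_of_le h

/-- the common reduced form: `(2^n) • rdet M i` -/
lemma rdet_reduced {M A : Matrix (Fin n) (Fin n) ℍ[ℝ]} (hA : Aᴴ = A) {i : Fin n}
    (hMA : ∀ p q, p ≠ i → M p q = A p q) :
    (2^n : ℝ) • rdet M i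
      = ∑ σ : Equiv.Perm (Fin n),
          (sgn σ * symR A σ (otherMins σ i) n) • Pc M σ i := by
  rw [rdet_engine_form hMA]
  have := engine A (fun σ => otherMins σ i) (fun σ => Pc M σ i) (fun _ => 1)
    (fun σ => otherMins_nodup σ i) (fun σ z hz => hstep_otherMins hA i σ z hz) n
  rw [this]
  refine Finset.sum_congr rfl fun σ _ => ?_
  rw [drop_len_le (otherMins_length_le σ i)]
  simp

lemma symR_reverse (A : Matrix (Fin n) (Fin n) ℍ[ℝ]) (σ : Perm (Fin n))
    (L : List (Fin n)) (h : L.length ≤ n) :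
    symR A σ L.reverse n = symR A σ L n := by
  unfold symR
  rw [List.length_reverse, List.take_of_length_le (by simpa using h),
    List.take_of_length_le h, List.map_reverse, List.prod_reverse]

lemma cdet_reduced {M A : Matrix (Fin n) (Fin n) ℍ[ℝ]} (hA : Aᴴ = A) {i : Fin n}
    (hMA : ∀ p q, p ≠ i → M p q = A p q) :
    (2^n : ℝ) • cdet M i
      = ∑ σ : Equiv.Perm (Fin n),
          (sgn σ * symR A σ (otherMins σ i) n) • Pc M σ i := by
  rw [cdet_engine_form hMA]
  have := engine A (fun σ => (otherMins σ i).reverse) (fun _ => 1) (fun σ => Pc M σ i)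
    (fun σ => List.nodup_reverse.2 (otherMins_nodup σ i))
    (fun σ z hz => by
      have hz' : z ∈ otherMins σ i := List.mem_reverse.1 hz
      obtain ⟨h1, h2, h3, h4, h5⟩ := hstep_otherMins (A := A) (M := M) hA i σ z hz'
      exact ⟨by simp only [h1], rfl, h2,
        fun w hw hne => h4 w (List.mem_reverse.1 hw) hne, h5⟩) n
  rw [this]
  refine Finset.sum_congr rfl fun σ _ => ?_
  rw [drop_len_le (by simpa using otherMins_length_le σ i), symR_reverse A σ _
    (otherMins_length_le σ i)]
  simp

lemma detH_reduced {A : Matrix (Fin n) (Fin n) ℍ[ℝ]} (hA : Aᴴ = A) :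
    (2^n : ℝ) • detH A
      = ∑ σ : Equiv.Perm (Fin n),
          (sgn σ * symR A σ (allMins σ) n) • (1:ℍ[ℝ]) := by
  rw [detH_engine_form A]
  have := engine A (fun σ => allMins σ) (fun _ => 1) (fun _ => 1)
    (fun σ => allMins_nodup σ)
    (fun σ z hz => ⟨allMins_congr (mem_cyc_invCyc σ z), rfl, rfl,
      fun w hw hne => Pc_invCyc_not_mem A (allMins_pair_not_sameCycle hz hw hne),
      Pc_invCyc_mem hA (SameCycle.refl σ z)⟩) n
  rw [this]
  refine Finset.sum_congr rfl fun σ _ => ?_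
  rw [drop_len_le (allMins_length_le σ)]
  simp

/-! ### final pairing over the cycle of `i` -/

lemma coe_eq_smul_one (r : ℝ) : (r : ℍ[ℝ]) = r • (1:ℍ[ℝ]) := by
  rw [← Quaternion.coe_mul_eq_smul, mul_one]

lemma symR_congr {A : Matrix (Fin n) (Fin n) ℍ[ℝ]} {σ τ : Perm (Fin n)}
    {L : List (Fin n)} (T : ℕ) (h : ∀ w ∈ L, Pc A τ w = Pc A σ w) :
    symR A τ L T = symR A σ L T := by
  unfold symR
  congr 1
  exact congrArg List.prod <| List.map_congr_left fun w hw =>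
    by rw [h w (List.mem_of_mem_take hw)]

lemma not_sameCycle_i_of_mem_otherMins {σ : Perm (Fin n)} {i w : Fin n}
    (hw : w ∈ otherMins σ i) : ¬ σ.SameCycle i w := fun hc =>
  (mem_otherMins.1 hw).1 (mem_cyc.2 hc)

lemma reduced_A_eq_detH {A : Matrix (Fin n) (Fin n) ℍ[ℝ]} (hA : Aᴴ = A) (i : Fin n) :
    ∑ σ : Equiv.Perm (Fin n), (sgn σ * symR A σ (otherMins σ i) n) • Pc A σ i
      = (2^n : ℝ) • detH A := by
  set f : Perm (Fin n) → ℍ[ℝ] :=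
    fun σ => (sgn σ * symR A σ (otherMins σ i) n) • Pc A σ i with hf
  set h : Perm (Fin n) → Perm (Fin n) := fun σ => invCyc σ i with hh
  have hinv : Function.Involutive h := fun σ => invCyc_invCyc σ i
  have step : ∀ σ, f σ + f (h σ) =
      (2 * (sgn σ * symR A σ (allMins σ) n)) • (1:ℍ[ℝ]) := by
    intro σ
    have hsgn : sgn (h σ) = sgn σ := sgn_invCyc σ i
    have hMs : otherMins (h σ) i = otherMins σ i := otherMins_congr i (mem_cyc_invCyc σ i)
    have hsym : symR A (h σ) (otherMins (h σ) i) n = symR A σ (otherMins σ i) n := by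
      rw [hMs]
      exact symR_congr n fun w hw =>
        Pc_invCyc_not_mem A (not_sameCycle_i_of_mem_otherMins hw)
    have hP : Pc A (h σ) i = star (Pc A σ i) := Pc_invCyc_mem hA (SameCycle.refl σ i)
    rw [hf]
    simp only
    rw [hsgn, hsym, hP, ← smul_add, Quaternion.self_add_star', coe_eq_smul_one, smul_smul]
    -- now scalar arithmetic
    have harith : sgn σ * symR A σ (otherMins σ i) n * (2 * (Pc A σ i).re)
        = 2 * (sgn σ * symR A σ (allMins σ) n) := by
      unfold symR
      rw [List.take_of_length_le (otherMins_length_le σ i),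
        List.take_of_length_le (allMins_length_le σ),
        allMins_prod_split σ i (fun w => 2 * (Pc A σ w).re),
        Pc_re_sameCycle (A := A) (orbMin_sameCycle σ i),
        show n - (otherMins σ i).length = (n - (allMins σ).length) + 1 from by
          have h1 := allMins_length σ i
          have h2 := allMins_length_le σ
          omega,
        pow_succ]
      ring
    rw [harith]
  have h2 : (2:ℝ) • (∑ σ : Perm (Fin n), f σ)
      = (2:ℝ) • ((2^n : ℝ) • detH A) := by
    rw [detH_reduced hA]
    calc (2:ℝ) • (∑ σ : Perm (Fin n), f σ)
        = ∑ σ : Perm (Fin n), f σ + ∑ σ : Perm (Fin n), f (h σ) := by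
          rw [two_smul]
          congr 1
          exact (Fintype.sum_bijective h hinv.bijective _ _ (fun σ => rfl)).symm
      _ = ∑ σ : Perm (Fin n), (f σ + f (h σ)) := Finset.sum_add_distrib.symm
      _ = ∑ σ : Perm (Fin n), (2 * (sgn σ * symR A σ (allMins σ) n)) • (1:ℍ[ℝ]) :=
          Finset.sum_congr rfl (fun σ _ => step σ)
      _ = (2:ℝ) • ∑ σ : Perm (Fin n), (sgn σ * symR A σ (allMins σ) n) • (1:ℍ[ℝ]) := by
          rw [Finset.smul_sum]
          exact Finset.sum_congr rfl (fun σ _ => by rw [smul_smul])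
  exact smul_right_injective ℍ[ℝ] (two_ne_zero) h2

lemma rdet_eq_detH {A : Matrix (Fin n) (Fin n) ℍ[ℝ]} (hA : Aᴴ = A) (i : Fin n) :
    rdet A i = detH A := by
  have h1 := rdet_reduced (M := A) hA (i := i) (fun p q _ => rfl)
  rw [reduced_A_eq_detH hA i] at h1
  exact smul_right_injective ℍ[ℝ] (by positivity : (2:ℝ)^n ≠ 0) h1

lemma cdet_eq_detH {A : Matrix (Fin n) (Fin n) ℍ[ℝ]} (hA : Aᴴ = A) (i : Fin n) :
    cdet A i = detH A := by
  have h1 := cdet_reduced (M := A) hA (i := i) (fun p q _ => rfl)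
  rw [reduced_A_eq_detH hA i] at h1
  exact smul_right_injective ℍ[ℝ] (by positivity : (2:ℝ)^n ≠ 0) h1

/-! ### splitting the first factor of the `i`-cycle product -/

lemma Pc_row_split {M A : Matrix (Fin n) (Fin n) ℍ[ℝ]} {i : Fin n}
    (hMA : ∀ p q, p ≠ i → M p q = A p q) (σ : Perm (Fin n)) :
    Pc M σ i = M i (σ i) *
      ((((List.range (per σ i - 1)).map fun k => (σ ^ (k+1)) i).map
        fun y => A y (σ y)).prod) := by
  have hnd := cyc_nodup σ i
  rw [cyc_head σ i] at hnd
  unfold Pc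
  rw [cyc_head σ i, List.map_cons, List.prod_cons]
  congr 1
  refine congrArg List.prod <| List.map_congr_left fun y hy => ?_
  refine hMA y (σ y) fun hc => ?_
  exact (List.nodup_cons.1 hnd).1 (hc ▸ hy)

/-! ### merging two cycles with a transposition -/

section Merge

variable {σ : Perm (Fin n)} {i j : Fin n}

lemma mul_swap_left (σ : Perm (Fin n)) (i j : Fin n) : (σ * Equiv.swap i j) i = σ j := by
  rw [Perm.mul_apply, Equiv.swap_apply_left]

lemma mul_swap_right (σ : Perm (Fin n)) (i j : Fin n) : (σ * Equiv.swap i j) j = σ i := by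
  rw [Perm.mul_apply, Equiv.swap_apply_right]

lemma mul_swap_other {x : Fin n} (σ : Perm (Fin n)) (hxi : x ≠ i) (hxj : x ≠ j) :
    (σ * Equiv.swap i j) x = σ x := by
  rw [Perm.mul_apply, Equiv.swap_apply_of_ne_of_ne hxi hxj]

lemma pow_j_ne_i (hU : ¬ σ.SameCycle i j) (k : ℕ) : (σ ^ k) j ≠ i := by
  intro hc
  exact hU (((sameCycle_pow σ j k).trans (hc ▸ SameCycle.refl σ _)).symm)

lemma pow_i_ne_j (hU : ¬ σ.SameCycle i j) (k : ℕ) : (σ ^ k) i ≠ j := by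
  intro hc
  exact hU ((sameCycle_pow σ i k).trans (hc ▸ SameCycle.refl σ _))

lemma pow_ne_self {x : Fin n} {k : ℕ} (hk : 0 < k) (hk' : k < per σ x) :
    (σ ^ k) x ≠ x := by
  intro hc
  have : k = 0 := pow_eq_of_lt_per hk' (per_pos σ x) (by simpa using hc)
  omega

/-- iterates of the merged permutation: the `j`-cycle part -/
lemma merge_pow1 (hU : ¬ σ.SameCycle i j) :
    ∀ k, 1 ≤ k → k ≤ per σ j → ((σ * Equiv.swap i j) ^ k) i = (σ ^ k) j := by
  intro k
  induction k with
  | zero => omega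
  | succ k ih =>
      intro _ hks
      rcases Nat.eq_zero_or_pos k with hk0 | hk0
      · subst hk0
        simpa using mul_swap_left σ i j
      · rw [pow_succ', Perm.mul_apply, ih hk0 (by omega),
          mul_swap_other σ (pow_j_ne_i hU k) (pow_ne_self hk0 (by omega)),
          ← Perm.mul_apply, ← pow_succ']

lemma merge_pow_at_s (hU : ¬ σ.SameCycle i j) :
    ((σ * Equiv.swap i j) ^ per σ j) i = j := by
  rw [merge_pow1 hU _ (per_pos σ j) le_rfl, pow_per]

/-- iterates of the merged permutation: the `i`-cycle part -/
lemma merge_pow2 (hU : ¬ σ.SameCycle i j) :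
    ∀ b, 1 ≤ b → b ≤ per σ i →
      ((σ * Equiv.swap i j) ^ (per σ j + b)) i = (σ ^ b) i := by
  intro b
  induction b with
  | zero => omega
  | succ b ih =>
      intro _ hbr
      rcases Nat.eq_zero_or_pos b with hb0 | hb0
      · subst hb0
        rw [pow_succ', Perm.mul_apply, merge_pow_at_s hU]
        simpa using mul_swap_right σ i j
      · rw [show per σ j + (b+1) = (per σ j + b) + 1 from rfl, pow_succ', Perm.mul_apply,
          ih hb0 (by omega),
          mul_swap_other σ (pow_ne_self hb0 (by omega)) (pow_i_ne_j hU b),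
          ← Perm.mul_apply, ← pow_succ']

lemma merge_periodic (hU : ¬ σ.SameCycle i j) :
    ((σ * Equiv.swap i j) ^ (per σ j + per σ i)) i = i := by
  rw [merge_pow2 hU _ (per_pos σ i) le_rfl, pow_per]

lemma merge_pow_ne (hU : ¬ σ.SameCycle i j) :
    ∀ m, 0 < m → m < per σ j + per σ i → ((σ * Equiv.swap i j) ^ m) i ≠ i := by
  intro m hm0 hm
  rcases le_or_gt m (per σ j) with hms | hms
  · rw [merge_pow1 hU m hm0 hms]
    exact fun hc => pow_j_ne_i hU m hc
  · obtain ⟨b, rfl⟩ : ∃ b, m = per σ j + b := ⟨m - per σ j, by omega⟩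
    rw [merge_pow2 hU b (by omega) (by omega)]
    exact pow_ne_self (by omega) (by omega)

lemma merge_per (hU : ¬ σ.SameCycle i j) :
    per (σ * Equiv.swap i j) i = per σ j + per σ i := by
  have hpp : Function.IsPeriodicPt ⇑(σ * Equiv.swap i j) (per σ j + per σ i) i := by
    show (⇑(σ * Equiv.swap i j))^[per σ j + per σ i] i = i
    rw [← Equiv.Perm.coe_pow]
    exact merge_periodic hU
  have hle : per (σ * Equiv.swap i j) i ≤ per σ j + per σ i := by
    have h1 := per_pos σ i
    have h2 := per_pos σ j
    exact hpp.minimalPeriod_le (by omega)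
  rcases lt_or_eq_of_le hle with hlt | heq
  · exact absurd (pow_per (σ * Equiv.swap i j) i)
      (merge_pow_ne hU _ (per_pos _ i) hlt)
  · exact heq

lemma merge_sameCycle_i_j (hU : ¬ σ.SameCycle i j) :
    (σ * Equiv.swap i j).SameCycle i j :=
  ⟨per σ j, by rw [zpow_natCast, merge_pow_at_s hU]⟩

/-- membership in the merged cycle -/
lemma merge_sameCycle_iff (hU : ¬ σ.SameCycle i j) (x : Fin n) :
    (σ * Equiv.swap i j).SameCycle i x ↔ (σ.SameCycle i x ∨ σ.SameCycle j x) := by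
  constructor
  · intro h
    have hx : x ∈ cyc (σ * Equiv.swap i j) i := mem_cyc.2 h
    rw [cyc_def] at hx
    simp only [List.mem_map, List.mem_range] at hx
    obtain ⟨m, hm, rfl⟩ := hx
    rw [merge_per hU] at hm
    rcases Nat.eq_zero_or_pos m with hm0 | hm0
    · subst hm0; exact Or.inl (SameCycle.refl _ _)
    rcases le_or_gt m (per σ j) with hms | hms
    · rw [merge_pow1 hU m hm0 hms]
      exact Or.inr (sameCycle_pow σ j m)
    · obtain ⟨b, rfl⟩ : ∃ b, m = per σ j + b := ⟨m - per σ j, by omega⟩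
      rw [merge_pow2 hU b (by omega) (by omega)]
      exact Or.inl (sameCycle_pow σ i b)
  · intro h
    rcases h with h | h
    · have hx : x ∈ cyc σ i := mem_cyc.2 h
      rw [cyc_def] at hx
      simp only [List.mem_map, List.mem_range] at hx
      obtain ⟨b, hb, rfl⟩ := hx
      rcases Nat.eq_zero_or_pos b with hb0 | hb0
      · subst hb0; exact SameCycle.refl _ _
      · rw [← merge_pow2 hU b hb0 (by omega)]
        exact sameCycle_pow _ i _
    · have hx : x ∈ cyc σ j := mem_cyc.2 h
      rw [cyc_def] at hx
      simp only [List.mem_map, List.mem_range] at hx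
      obtain ⟨k, hk, rfl⟩ := hx
      rcases Nat.eq_zero_or_pos k with hk0 | hk0
      · subst hk0
        simpa using merge_sameCycle_i_j hU
      · rw [← merge_pow1 hU k hk0 (by omega)]
        exact sameCycle_pow _ i _

/-- splitting: if `i` and `j` are on the same cycle, multiplying by the swap separates them -/
lemma split_not_sameCycle (hij : j ≠ i) (hM : σ.SameCycle i j) :
    ¬ (σ * Equiv.swap i j).SameCycle i j := by
  have hj : j ∈ cyc σ i := mem_cyc.2 hM
  rw [cyc_def] at hj
  simp only [List.mem_map, List.mem_range] at hj
  obtain ⟨a, ha, haj⟩ := hj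
  have ha0 : 0 < a := by
    rcases Nat.eq_zero_or_pos a with h0 | h0
    · subst h0; exact absurd haj.symm (by simpa using hij)
    · exact h0
  have hpowB : ∀ c, 1 ≤ c → c ≤ per σ i - a →
      ((σ * Equiv.swap i j) ^ c) i = (σ ^ (a + c)) i := by
    intro c
    induction c with
    | zero => omega
    | succ c ih =>
        intro _ hc
        rcases Nat.eq_zero_or_pos c with hc0 | hc0
        · subst hc0
          rw [pow_one, mul_swap_left σ i j, ← haj, ← Perm.mul_apply, ← pow_succ']
        · rw [pow_succ', Perm.mul_apply, ih hc0 (by omega)]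
          have h1 : (σ ^ (a + c)) i ≠ i := pow_ne_self (by omega) (by omega)
          have h2 : (σ ^ (a + c)) i ≠ j := by
            rw [← haj]
            intro hc2
            have := pow_eq_of_lt_per (a := a + c) (b := a) (by omega) (by omega) hc2
            omega
          rw [mul_swap_other σ h1 h2, ← Perm.mul_apply, ← pow_succ',
            show a + c + 1 = a + (c + 1) from by omega]
  have hper : per (σ * Equiv.swap i j) i ≤ per σ i - a := by
    have hpp : Function.IsPeriodicPt ⇑(σ * Equiv.swap i j) (per σ i - a) i := by
      show (⇑(σ * Equiv.swap i j))^[per σ i - a] i = i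
      rw [← Equiv.Perm.coe_pow, hpowB _ (by omega) le_rfl,
        show a + (per σ i - a) = per σ i from by omega, pow_per]
    exact hpp.minimalPeriod_le (by omega)
  intro hc
  have hj' : j ∈ cyc (σ * Equiv.swap i j) i := mem_cyc.2 hc
  rw [cyc_def] at hj'
  simp only [List.mem_map, List.mem_range] at hj'
  obtain ⟨m, hm, hmj⟩ := hj'
  rcases Nat.eq_zero_or_pos m with hm0 | hm0
  · subst hm0; exact hij (by simpa using hmj.symm)
  · rw [hpowB m hm0 (by omega)] at hmj
    rcases lt_or_eq_of_le (show a + m ≤ per σ i from by omega) with hlt | heq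
    · rw [← haj] at hmj
      have := pow_eq_of_lt_per hlt (by omega) hmj
      omega
    · rw [heq, pow_per] at hmj
      exact hij hmj.symm

end Merge

section Merge2

variable {σ : Perm (Fin n)} {i j : Fin n}

lemma merge_Pc (hU : ¬ σ.SameCycle i j) (hij : j ≠ i)
    {C A : Matrix (Fin n) (Fin n) ℍ[ℝ]} (hCA : ∀ p q, p ≠ i → C p q = A p q)
    (hCval : ∀ q, C i q = A j q) :
    Pc C (σ * Equiv.swap i j) i = Pc A σ j * Pc C σ i := by
  rw [Pc_entry_form, Pc_entry_form, Pc_entry_form, merge_per hU]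
  rw [List.range_add, List.map_append, List.prod_append]
  congr 1
  · refine congrArg List.prod <| List.map_congr_left fun k hk => ?_
    have hk' : k < per σ j := List.mem_range.1 hk
    rcases Nat.eq_zero_or_pos k with hk0 | hk0
    · subst hk0
      rw [pow_zero, pow_one, Perm.one_apply, mul_swap_left σ i j, hCval, pow_zero,
        pow_one, Perm.one_apply]
    · rw [merge_pow1 hU k hk0 (by omega), merge_pow1 hU (k+1) (by omega) (by omega),
        hCA _ _ (pow_j_ne_i hU k)]
  · rw [List.map_map]
    refine congrArg List.prod <| List.map_congr_left fun b hb => ?_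
    have hb' : b < per σ i := List.mem_range.1 hb
    simp only [Function.comp_apply]
    rcases Nat.eq_zero_or_pos b with hb0 | hb0
    · subst hb0
      rw [Nat.add_zero, merge_pow_at_s hU,
        show per σ j + 1 = per σ j + 1 from rfl,
        merge_pow2 hU 1 le_rfl (per_pos σ i), pow_one,
        hCA j (σ i) hij, pow_zero, Perm.one_apply, hCval]
    · rw [show per σ j + b + 1 = per σ j + (b+1) from rfl,
        merge_pow2 hU b hb0 (by omega), merge_pow2 hU (b+1) (by omega) (by omega)]

lemma merge_outside_agree {x : Fin n} (hout_i : ¬ σ.SameCycle i x)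
    (hout_j : ¬ σ.SameCycle j x) :
    ∀ y, σ.SameCycle x y → (σ * Equiv.swap i j) y = σ y := by
  intro y hy
  refine mul_swap_other σ (fun hc => hout_i ?_) (fun hc => hout_j ?_)
  · subst hc; exact hy.symm
  · subst hc; exact hy.symm

lemma merge_cyc_outside {x : Fin n} (hout_i : ¬ σ.SameCycle i x)
    (hout_j : ¬ σ.SameCycle j x) :
    cyc (σ * Equiv.swap i j) x = cyc σ x :=
  cyc_agree (merge_outside_agree hout_i hout_j)

lemma merge_Pc_outside {x : Fin n} (B : Matrix (Fin n) (Fin n) ℍ[ℝ])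
    (hout_i : ¬ σ.SameCycle i x) (hout_j : ¬ σ.SameCycle j x) :
    Pc B (σ * Equiv.swap i j) x = Pc B σ x :=
  Pc_agree (merge_outside_agree hout_i hout_j)
    (fun y hy => by rw [merge_outside_agree hout_i hout_j y hy])

lemma merge_otherMins (hU : ¬ σ.SameCycle i j) :
    otherMins (σ * Equiv.swap i j) i
      = (otherMins σ i).filter (fun x => !decide (x ∈ cyc σ j)) := by
  unfold otherMins
  rw [List.filter_filter]
  refine List.filter_congr fun x _ => ?_
  by_cases h1 : σ.SameCycle i x
  · have hm1 : x ∈ cyc σ i := mem_cyc.2 h1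
    have hm2 : x ∈ cyc (σ * Equiv.swap i j) i :=
      mem_cyc.2 ((merge_sameCycle_iff hU x).2 (Or.inl h1))
    simp [hm1, hm2]
  · by_cases h2 : σ.SameCycle j x
    · have hm1 : x ∈ cyc σ j := mem_cyc.2 h2
      have hm2 : x ∈ cyc (σ * Equiv.swap i j) i :=
        mem_cyc.2 ((merge_sameCycle_iff hU x).2 (Or.inr h2))
      simp [hm1, hm2]
    · have hx1 : x ∉ cyc (σ * Equiv.swap i j) i := fun hc => by
        rcases (merge_sameCycle_iff hU x).1 (mem_cyc.1 hc) with h | h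
        · exact h1 h
        · exact h2 h
      have hx2 : x ∉ cyc σ i := fun hc => h1 (mem_cyc.1 hc)
      have hx3 : x ∉ cyc σ j := fun hc => h2 (mem_cyc.1 hc)
      have hcyc : cyc (σ * Equiv.swap i j) x = cyc σ x := merge_cyc_outside h1 h2
      simp [hx1, hx2, hx3, hcyc]

lemma orbMin_j_mem_otherMins (hU : ¬ σ.SameCycle i j) :
    orbMin σ j ∈ otherMins σ i := by
  refine mem_otherMins.2 ⟨?_, orbMin_min σ j⟩
  intro hc
  exact hU ((mem_cyc.1 hc).trans (orbMin_sameCycle σ j).symm)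

lemma otherMins_filter_j (hU : ¬ σ.SameCycle i j) :
    (otherMins σ i).filter (fun x => decide (x ∈ cyc σ j)) = [orbMin σ j] := by
  refine nodup_singleton_of_mem ((otherMins_nodup σ i).filter _) ?_ ?_
  · rw [List.mem_filter]
    exact ⟨orbMin_j_mem_otherMins hU, by simp [orbMin_mem σ j]⟩
  · intro x hx
    rw [List.mem_filter] at hx
    have hx2 : x ∈ cyc σ j := by simpa using hx.2
    exact min_eq_of_sameCycle (mem_otherMins.1 hx.1).2 (orbMin_min σ j)
      ((mem_cyc.1 hx2).symm.trans (orbMin_sameCycle σ j))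

lemma merge_length (hU : ¬ σ.SameCycle i j) :
    (otherMins σ i).length = (otherMins (σ * Equiv.swap i j) i).length + 1 := by
  have h := List.length_eq_length_filter_add (l := otherMins σ i)
    (fun x => decide (x ∈ cyc σ j))
  rw [otherMins_filter_j hU, List.length_singleton] at h
  rw [merge_otherMins hU]
  omega

lemma merge_prod_split (hU : ¬ σ.SameCycle i j) (g : Fin n → ℝ) :
    ((otherMins σ i).map g).prod
      = g (orbMin σ j) *
        (((otherMins σ i).filter (fun x => !decide (x ∈ cyc σ j))).map g).prod := by
  have h := List.prod_map_filter_mul_prod_map_filter_not (l := otherMins σ i)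
    (fun x => x ∈ cyc σ j) g
  rw [otherMins_filter_j hU] at h
  have e : (otherMins σ i).filter (fun x => decide ¬(x ∈ cyc σ j))
      = (otherMins σ i).filter (fun x => !decide (x ∈ cyc σ j)) := by
    refine List.filter_congr fun x _ => ?_
    simp
  rw [e] at h
  simpa using h.symm

end Merge2

/-! ### the vanishing of the cross terms -/

section Vanish

variable {A : Matrix (Fin n) (Fin n) ℍ[ℝ]} {i j : Fin n}

/-- the partial product over minimal representatives away from the cycles of `i` and `j` -/
def Pf (A : Matrix (Fin n) (Fin n) ℍ[ℝ]) (σ : Perm (Fin n)) (i j : Fin n) : ℝ :=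
  (((otherMins σ i).filter (fun x => !decide (x ∈ cyc σ j))).map
    fun w => 2 * (Pc A σ w).re).prod

lemma symR_merge (hU : ¬ σ.SameCycle i j) :
    symR A (σ * Equiv.swap i j) (otherMins (σ * Equiv.swap i j) i) n
      = 2^(n - (otherMins σ i).length + 1) * Pf A σ i j := by
  have hL1 : 1 ≤ (otherMins σ i).length :=
    List.length_pos_of_mem (orbMin_j_mem_otherMins hU)
  have hLn : (otherMins σ i).length ≤ n := otherMins_length_le σ i
  have hlen := merge_length hU
  unfold symR
  rw [List.take_of_length_le (by omega : (otherMins (σ * Equiv.swap i j) i).length ≤ n)]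
  rw [show n - (otherMins (σ * Equiv.swap i j) i).length
      = n - (otherMins σ i).length + 1 from by omega]
  congr 1
  unfold Pf
  rw [merge_otherMins hU]
  refine congrArg List.prod <| List.map_congr_left fun w hw => ?_
  rw [List.mem_filter] at hw
  have hw1 : ¬ σ.SameCycle i w := not_sameCycle_i_of_mem_otherMins hw.1
  have hw2 : ¬ σ.SameCycle j w := fun hc => by simp [mem_cyc.2 hc] at hw
  rw [merge_Pc_outside A hw1 hw2]

lemma symR_base (hU : ¬ σ.SameCycle i j) :
    symR A σ (otherMins σ i) n
      = 2^(n - (otherMins σ i).length) * ((2 * (Pc A σ j).re) * Pf A σ i j) := by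
  unfold symR
  rw [List.take_of_length_le (otherMins_length_le σ i),
    merge_prod_split hU (fun w => 2 * (Pc A σ w).re),
    Pc_re_sameCycle (A := A) (orbMin_sameCycle σ j)]
  rfl

lemma Pf_invCyc (hA : Aᴴ = A) (σ : Perm (Fin n)) :
    Pf A (invCyc σ j) i j = Pf A σ i j := by
  unfold Pf
  have h1 : otherMins (invCyc σ j) i = otherMins σ i :=
    otherMins_congr i (mem_cyc_invCyc σ j)
  rw [h1]
  have h2 : (otherMins σ i).filter (fun x => !decide (x ∈ cyc (invCyc σ j) j))
      = (otherMins σ i).filter (fun x => !decide (x ∈ cyc σ j)) := by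
    refine List.filter_congr fun x _ => ?_
    rw [decide_eq_decide.2 (mem_cyc_invCyc σ j j x)]
  rw [h2]
  refine congrArg List.prod <| List.map_congr_left fun w hw => ?_
  rw [List.mem_filter] at hw
  have hw2 : ¬ σ.SameCycle j w := fun hc => by simp [mem_cyc.2 hc] at hw
  rw [Pc_invCyc_not_mem A hw2]

lemma symR_invCyc_j (hA : Aᴴ = A) (σ : Perm (Fin n)) :
    symR A (invCyc σ j) (otherMins (invCyc σ j) i) n = symR A σ (otherMins σ i) n := by
  rw [otherMins_congr i (mem_cyc_invCyc σ j)]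
  unfold symR
  congr 1
  refine congrArg List.prod <| List.map_congr_left fun w hw => ?_
  have hw' : w ∈ otherMins σ i := List.mem_of_mem_take hw
  by_cases hc : σ.SameCycle j w
  · rw [Pc_invCyc_mem hA hc, Quaternion.re_star]
  · rw [Pc_invCyc_not_mem A hc]

lemma vanish (hA : Aᴴ = A) (hij : j ≠ i) :
    ∑ σ : Equiv.Perm (Fin n),
      (sgn σ * symR A σ (otherMins σ i) n) • Pc (A.updateRow i (A j)) σ i = 0 := by
  classical
  set C := A.updateRow i (A j) with hC
  have hCA : ∀ p q, p ≠ i → C p q = A p q := fun p q hp => congrFun (A.updateRow_ne hp) q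
  have hCval : ∀ q, C i q = A j q := fun q => by rw [hC, A.updateRow_self]
  set f : Perm (Fin n) → ℍ[ℝ] :=
    fun σ => (sgn σ * symR A σ (otherMins σ i) n) • Pc C σ i with hf
  have hswap_invol : ∀ τ : Perm (Fin n), τ * Equiv.swap i j * Equiv.swap i j = τ := by
    intro τ
    rw [mul_assoc, Equiv.swap_mul_self, mul_one]
  -- split the sum
  have hsplit := Finset.sum_filter_add_sum_filter_not Finset.univ
    (fun σ : Perm (Fin n) => σ.SameCycle i j) f
  -- rewrite sum over merged permutations
  have hVU : ∑ σ ∈ Finset.univ.filter (fun σ : Perm (Fin n) => σ.SameCycle i j), f σ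
      = ∑ σ ∈ Finset.univ.filter (fun σ : Perm (Fin n) => ¬ σ.SameCycle i j),
          f (σ * Equiv.swap i j) := by
    refine Finset.sum_nbij' (fun σ => σ * Equiv.swap i j) (fun σ => σ * Equiv.swap i j)
      ?_ ?_ ?_ ?_ ?_
    · intro σ hσ
      simp only [Finset.mem_filter, Finset.mem_univ, true_and] at hσ ⊢
      exact split_not_sameCycle hij hσ
    · intro σ hσ
      simp only [Finset.mem_filter, Finset.mem_univ, true_and] at hσ ⊢
      exact merge_sameCycle_i_j hσ
    · intro σ _; exact hswap_invol σ
    · intro σ _; exact hswap_invol σ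
    · intro σ _
      rw [hswap_invol σ]
  -- the summand over the unmerged set
  set U := Finset.univ.filter (fun σ : Perm (Fin n) => ¬ σ.SameCycle i j) with hUdef
  set g : Perm (Fin n) → ℍ[ℝ] := fun σ => f σ + f (σ * Equiv.swap i j) with hg
  have htotal : ∑ σ : Perm (Fin n), f σ = ∑ σ ∈ U, g σ := by
    rw [← hsplit, hVU, ← Finset.sum_add_distrib]
    exact Finset.sum_congr rfl fun σ _ => add_comm _ _
  -- pair with the inversion of the cycle of j
  have hι : ∀ σ ∈ U, invCyc σ j ∈ U := by
    intro σ hσ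
    simp only [hUdef, Finset.mem_filter, Finset.mem_univ, true_and] at hσ ⊢
    exact fun hc => hσ ((sameCycle_invCyc σ j i j).1 hc)
  have hgsum : ∑ σ ∈ U, g σ = ∑ σ ∈ U, g (invCyc σ j) := by
    refine Finset.sum_nbij' (fun σ => invCyc σ j) (fun σ => invCyc σ j) hι hι ?_ ?_ ?_
    · intro σ _; exact invCyc_invCyc σ j
    · intro σ _; exact invCyc_invCyc σ j
    · intro σ _
      show g σ = g (invCyc (invCyc σ j) j)
      rw [invCyc_invCyc]
  -- pointwise cancellation
  have hzero : ∀ σ ∈ U, g σ + g (invCyc σ j) = 0 := by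
    intro σ hσ
    have hU : ¬ σ.SameCycle i j := by
      simpa [hUdef] using hσ
    have hUι : ¬ (invCyc σ j).SameCycle i j := fun hc => hU ((sameCycle_invCyc σ j i j).1 hc)
    have hji : ¬ σ.SameCycle j i := fun hc => hU hc.symm
    set L := (otherMins σ i).length with hL
    have hL1 : 1 ≤ L := List.length_pos_of_mem (orbMin_j_mem_otherMins hU)
    have hLn : L ≤ n := otherMins_length_le σ i
    -- f σ
    have hfσ : f σ = (sgn σ * (2^(n - L) * ((2 * (Pc A σ j).re) * Pf A σ i j))) •
        Pc C σ i := by rw [hf]; simp only; rw [symR_base hU]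
    -- f (σ * swap)
    have hsgn_swap : ∀ τ : Perm (Fin n), sgn (τ * Equiv.swap i j) = -sgn τ := by
      intro τ
      unfold sgn
      rw [Equiv.Perm.sign_mul, Equiv.Perm.sign_swap (fun hc => hij hc.symm)]
      push_cast
      ring
    have hfkσ : f (σ * Equiv.swap i j)
        = (-(sgn σ) * (2^(n - L + 1) * Pf A σ i j)) • (Pc A σ j * Pc C σ i) := by
      rw [hf]
      simp only
      rw [hsgn_swap σ, symR_merge hU, merge_Pc hU hij hCA hCval, ← hL]
    -- f (invCyc σ j)
    have hfι : f (invCyc σ j) = f σ := by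
      rw [hf]
      simp only
      rw [sgn_invCyc, symR_invCyc_j hA σ, Pc_invCyc_not_mem C hji]
    -- f (invCyc σ j * swap)
    have hLι : (otherMins (invCyc σ j) i).length = L := by
      rw [otherMins_congr i (mem_cyc_invCyc σ j)]
    have hfικ : f (invCyc σ j * Equiv.swap i j)
        = (-(sgn σ) * (2^(n - L + 1) * Pf A σ i j)) •
            (star (Pc A σ j) * Pc C σ i) := by
      rw [hf]
      simp only
      rw [hsgn_swap _, sgn_invCyc, symR_merge hUι, hLι, Pf_invCyc hA σ,
        merge_Pc hUι hij hCA hCval, Pc_invCyc_mem hA (SameCycle.refl σ j),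
        Pc_invCyc_not_mem C hji]
    set a : ℝ := sgn σ * 2^(n-L) * Pf A σ i j with ha
    set rj : ℝ := 2 * (Pc A σ j).re with hrj
    have hfσ' : f σ = (a * rj) • Pc C σ i := by
      rw [hfσ, ha, hrj]; ring_nf
    have hfkσ' : f (σ * Equiv.swap i j) = (-(2*a)) • (Pc A σ j * Pc C σ i) := by
      rw [hfkσ, ha, show (2:ℝ)^(n-L+1) = 2^(n-L)*2 from pow_succ 2 _]; ring_nf
    have hfικ' : f (invCyc σ j * Equiv.swap i j)
        = (-(2*a)) • (star (Pc A σ j) * Pc C σ i) := by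
      rw [hfικ, ha, show (2:ℝ)^(n-L+1) = 2^(n-L)*2 from pow_succ 2 _]; ring_nf
    have hq : Pc A σ j + star (Pc A σ j) = ((rj : ℝ) : ℍ[ℝ]) := by
      rw [hrj]; exact Quaternion.self_add_star' _
    rw [hg]
    simp only
    rw [hfι, hfσ', hfkσ', hfικ']
    -- algebraic cancellation
    have key : (-(2*a)) • (Pc A σ j * Pc C σ i) + (-(2*a)) • (star (Pc A σ j) * Pc C σ i)
        = (-(2*a*rj)) • Pc C σ i := by
      rw [← smul_add, ← add_mul, hq, Quaternion.coe_mul_eq_smul, smul_smul]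
      ring_nf
    calc ((a * rj) • Pc C σ i + (-(2*a)) • (Pc A σ j * Pc C σ i))
          + ((a * rj) • Pc C σ i + (-(2*a)) • (star (Pc A σ j) * Pc C σ i))
        = ((a * rj) • Pc C σ i + (a * rj) • Pc C σ i) +
            ((-(2*a)) • (Pc A σ j * Pc C σ i)
              + (-(2*a)) • (star (Pc A σ j) * Pc C σ i)) := by abel
      _ = ((a * rj) • Pc C σ i + (a * rj) • Pc C σ i) + (-(2*a*rj)) • Pc C σ i := by
          rw [key]
      _ = 0 := by
          rw [← add_smul, ← add_smul, show a*rj + a*rj + -(2*a*rj) = 0 from by ring,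
            zero_smul]
  have : (∑ σ ∈ U, g σ) + (∑ σ ∈ U, g σ) = 0 := by
    nth_rewrite 2 [hgsum]
    rw [← Finset.sum_add_distrib]
    rw [show (∑ σ ∈ U, (g σ + g (invCyc σ j))) = ∑ σ ∈ U, (0:ℍ[ℝ]) from
      Finset.sum_congr rfl (fun σ hσ => hzero σ hσ)]
    simp
  have hUg : ∑ σ ∈ U, g σ = 0 := by
    have h2 : (2:ℝ) • (∑ σ ∈ U, g σ) = (2:ℝ) • (0:ℍ[ℝ]) := by
      rw [smul_zero, two_smul]; exact this
    exact smul_right_injective ℍ[ℝ] (two_ne_zero (α := ℝ)) h2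
  rw [show (∑ σ : Equiv.Perm (Fin n),
      (sgn σ * symR A σ (otherMins σ i) n) • Pc C σ i) = ∑ σ : Perm (Fin n), f σ from rfl,
    htotal, hUg]

end Vanish

/-! ### linearity in the updated row, and the main theorem -/

section Main

variable {A : Matrix (Fin n) (Fin n) ℍ[ℝ]} {i : Fin n} {k : ℕ}

lemma Pc_B_split (c : Fin k → ℍ[ℝ]) (e : Fin k → Fin n) (σ : Perm (Fin n)) :
    Pc (A.updateRow i fun q => A i q + ∑ l, c l * A (e l) q) σ i
      = Pc A σ i + ∑ l, c l * Pc (A.updateRow i (A (e l))) σ i := by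
  set W := (((List.range (per σ i - 1)).map fun m => (σ ^ (m+1)) i).map
    fun y => A y (σ y)).prod with hW
  have hB := Pc_row_split (A := A) (i := i)
    (M := A.updateRow i fun q => A i q + ∑ l, c l * A (e l) q)
    (fun p q hp => congrFun (Matrix.updateRow_ne hp) q) σ
  have hA0 := Pc_row_split (A := A) (i := i) (M := A) (fun p q _ => rfl) σ
  have hCl : ∀ l, Pc (A.updateRow i (A (e l))) σ i = A (e l) (σ i) * W := by
    intro l
    rw [Pc_row_split (A := A) (i := i)
      (fun p q hp => congrFun (Matrix.updateRow_ne hp) q) σ, ← hW,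
      Matrix.updateRow_self]
  have hBval : (A.updateRow i fun q => A i q + ∑ l, c l * A (e l) q) i (σ i)
      = A i (σ i) + ∑ l, c l * A (e l) (σ i) := by
    rw [Matrix.updateRow_self]
  rw [hB, ← hW, hBval, hA0, ← hW, add_mul, Finset.sum_mul]
  congr 1
  refine Finset.sum_congr rfl fun l _ => ?_
  rw [hCl l, mul_assoc]

lemma reduced_B (hA : Aᴴ = A) (c : Fin k → ℍ[ℝ]) (e : Fin k → Fin n)
    (he : ∀ l, e l ≠ i) :
    ∑ σ : Equiv.Perm (Fin n), (sgn σ * symR A σ (otherMins σ i) n) •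
        Pc (A.updateRow i fun q => A i q + ∑ l, c l * A (e l) q) σ i
      = (2^n : ℝ) • detH A := by
  have step1 : ∀ σ : Perm (Fin n),
      (sgn σ * symR A σ (otherMins σ i) n) •
          Pc (A.updateRow i fun q => A i q + ∑ l, c l * A (e l) q) σ i
        = (sgn σ * symR A σ (otherMins σ i) n) • Pc A σ i
          + ∑ l, c l * ((sgn σ * symR A σ (otherMins σ i) n) •
              Pc (A.updateRow i (A (e l))) σ i) := by
    intro σ
    rw [Pc_B_split c e σ, smul_add, Finset.smul_sum]
    congr 1
    refine Finset.sum_congr rfl fun l _ => ?_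
    rw [mul_smul_comm]
  calc ∑ σ : Equiv.Perm (Fin n), (sgn σ * symR A σ (otherMins σ i) n) •
        Pc (A.updateRow i fun q => A i q + ∑ l, c l * A (e l) q) σ i
      = ∑ σ : Equiv.Perm (Fin n), ((sgn σ * symR A σ (otherMins σ i) n) • Pc A σ i
          + ∑ l, c l * ((sgn σ * symR A σ (otherMins σ i) n) •
              Pc (A.updateRow i (A (e l))) σ i)) :=
        Finset.sum_congr rfl fun σ _ => step1 σ
    _ = (∑ σ : Equiv.Perm (Fin n), (sgn σ * symR A σ (otherMins σ i) n) • Pc A σ i)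
          + ∑ l, c l * (∑ σ : Equiv.Perm (Fin n),
              (sgn σ * symR A σ (otherMins σ i) n) •
                Pc (A.updateRow i (A (e l))) σ i) := by
        rw [Finset.sum_add_distrib]
        congr 1
        rw [Finset.sum_comm]
        exact Finset.sum_congr rfl fun l _ => (Finset.mul_sum _ _ _).symm
    _ = (2^n : ℝ) • detH A := by
        rw [reduced_A_eq_detH hA i]
        have hvan : ∀ l, (∑ σ : Equiv.Perm (Fin n),
            (sgn σ * symR A σ (otherMins σ i) n) •
              Pc (A.updateRow i (A (e l))) σ i) = 0 := fun l => vanish hA (he l)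
        rw [show (∑ l, c l * (∑ σ : Equiv.Perm (Fin n),
            (sgn σ * symR A σ (otherMins σ i) n) •
              Pc (A.updateRow i (A (e l))) σ i)) = 0 from by
          refine Finset.sum_eq_zero fun l _ => ?_
          rw [hvan l, mul_zero]]
        rw [add_zero]

lemma main_thm (hA : Aᴴ = A) (c : Fin k → ℍ[ℝ]) (e : Fin k → Fin n)
    (he : ∀ l, e l ≠ i) :
    rdet (A.updateRow i fun q => A i q + ∑ l, c l * A (e l) q) i = detH A ∧
    cdet (A.updateRow i fun q => A i q + ∑ l, c l * A (e l) q) i = detH A := by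
  have hBA : ∀ p q, p ≠ i →
      (A.updateRow i fun q => A i q + ∑ l, c l * A (e l) q) p q = A p q :=
    fun p q hp => congrFun (Matrix.updateRow_ne hp) q
  constructor
  · have h1 := rdet_reduced hA hBA
    rw [reduced_B hA c e he] at h1
    exact smul_right_injective ℍ[ℝ] (by positivity : (2:ℝ)^n ≠ 0) h1
  · have h1 := cdet_reduced hA hBA
    rw [reduced_B hA c e he] at h1
    exact smul_right_injective ℍ[ℝ] (by positivity : (2:ℝ)^n ≠ 0) h1

end Main

end RDetAux

/-- If a left linear combination of other rows is added to the `i`-th row of a Hermitian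
matrix `A`, then the `i`-th row and column determinants of the resulting matrix are both
equal to `det A`. -/
theorem rdet_cdet_add_left_lin_comb (n k : ℕ) (A : Matrix (Fin n) (Fin n) ℍ[ℝ])
    (hA : Aᴴ = A) (i : Fin n) (c : Fin k → ℍ[ℝ]) (e : Fin k → Fin n)
    (he : ∀ l, e l ≠ i) :
    rdet (A.updateRow i fun q => A i q + ∑ l, c l * A (e l) q) i = detH A ∧
    cdet (A.updateRow i fun q => A i q + ∑ l, c l * A (e l) q) i = detH A := by
  exact RDetAux.main_thm hA c e he
end
end
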